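/- arXiv:1907.07541 — 7 statements merged into one kernel-verified Lean document; each statement's English description precedes it below -/
import Mathlib

section
/- Let G be a finite simple graph on n vertices and Gᶜ its complement graph. Then G satisfies the t-th Brouwer inequality for every t ∈ {1,…,n} if and only if Gᶜ satisfies the t-th Brouwer inequality for every t ∈ {1,…,n}. -/
/-- Sum of the `t` largest eigenvalues (with multiplicity) of a Hermitian real matrix. -/
noncomputable def topEigSum {m : Type} [Fintype m] [DecidableEq m]
    {A : Matrix m m ℝ} (hA : A.IsHermitian) (t : ℕ) : ℝ :=
  ((((Finset.univ.val.map hA.eigenvalues)).sort (· ≥ ·)).take t).sum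

/-- Sum of the `t` largest Laplacian eigenvalues of a finite simple graph. -/
noncomputable def lapEigSum {V : Type} [Fintype V] [DecidableEq V]
    (G : SimpleGraph V) (t : ℕ) : ℝ :=
  letI := Classical.decRel G.Adj
  topEigSum (SimpleGraph.posSemidef_lapMatrix ℝ G).isHermitian t

/-- Number of edges of a finite simple graph. -/
noncomputable def edgeCount {V : Type} [Fintype V] [DecidableEq V] (G : SimpleGraph V) : ℕ :=
  letI := Classical.decRel G.Adj
  G.edgeFinset.card

/-- `G` satisfies the `t`-th Brouwer inequality:
`λ₁ + ⋯ + λ_t ≤ e(G) + C(t+1,2)`. -/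
noncomputable def BrouwerIneq {V : Type} [Fintype V] [DecidableEq V]
    (G : SimpleGraph V) (t : ℕ) : Prop :=
  lapEigSum G t ≤ (edgeCount G : ℝ) + ((t + 1).choose 2 : ℝ)


open Multiset List in
noncomputable def msTop (s : Multiset ℝ) (t : ℕ) : ℝ :=
  ((s.sort (· ≥ ·)).take t).sum

lemma msTop_zero (s : Multiset ℝ) : msTop s 0 = 0 := rfl

lemma msTop_cons_max {a : ℝ} {s : Multiset ℝ} (h : ∀ b ∈ s, b ≤ a) (t : ℕ) :
    msTop (a ::ₘ s) (t + 1) = a + msTop s t := by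
  unfold msTop
  rw [Multiset.sort_cons a s _ h, List.take_succ_cons, List.sum_cons]

lemma sort_add_min {a : ℝ} {s : Multiset ℝ} (h : ∀ b ∈ s, a ≤ b) :
    (a ::ₘ s).sort (· ≥ ·) = s.sort (· ≥ ·) ++ [a] := by
  refine (fun hp h1 h2 => List.Perm.eq_of_pairwise' (r := (· ≥ ·)) h1 h2 hp) ?_ ?_ ?_
  · refine (Multiset.coe_eq_coe).1 ?_
    rw [Multiset.sort_eq,
      show ((Multiset.sort s (· ≥ ·) ++ [a] : List ℝ) : Multiset ℝ)
        = ↑(Multiset.sort s (· ≥ ·)) + ↑[a] from rfl,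
      Multiset.sort_eq, Multiset.coe_singleton, add_comm, Multiset.singleton_add]
  · exact Multiset.pairwise_sort _ _
  · rw [List.pairwise_append]
    refine ⟨Multiset.pairwise_sort _ _, by simp, ?_⟩
    intro x hx y hy
    simp at hy
    subst hy
    exact h x (by simpa using hx)

lemma msTop_cons_min {a : ℝ} {s : Multiset ℝ} (h : ∀ b ∈ s, a ≤ b) {t : ℕ}
    (ht : t ≤ Multiset.card s) :
    msTop (a ::ₘ s) t = msTop s t := by
  unfold msTop
  rw [sort_add_min h, List.take_append_of_le_length (by simpa using ht)]

lemma msTop_card (s : Multiset ℝ) : msTop s (Multiset.card s) = s.sum := by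
  unfold msTop
  rw [List.take_of_length_le (by simp)]
  exact congrArg Multiset.sum (Multiset.sort_eq s (· ≥ ·)) ▸ rfl


lemma list_sum_map_sub (c : ℝ) (l : List ℝ) :
    (l.map (fun x => c - x)).sum = l.length * c - l.sum := by
  induction l with
  | nil => simp
  | cons a l ih => simp [ih]; ring

lemma sort_map_sub (c : ℝ) (s : Multiset ℝ) :
    (s.map (fun x => c - x)).sort (· ≥ ·)
      = ((s.sort (· ≥ ·)).reverse).map (fun x => c - x) := by
  refine (fun hp h1 h2 => List.Perm.eq_of_pairwise' (r := (· ≥ ·)) h1 h2 hp) ?_ ?_ ?_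
  · refine (Multiset.coe_eq_coe).1 ?_
    rw [Multiset.sort_eq, ← Multiset.map_coe, Multiset.coe_reverse, Multiset.sort_eq]
  · exact Multiset.pairwise_sort _ _
  · rw [List.pairwise_map, List.pairwise_reverse]
    have := Multiset.pairwise_sort s (· ≥ ·)
    refine this.imp ?_
    intro a b hab
    simp only [ge_iff_le] at *
    linarith

lemma msTop_map_sub (c : ℝ) (s : Multiset ℝ) {t : ℕ} (ht : t ≤ Multiset.card s) :
    msTop (s.map (fun x => c - x)) t
      = t * c - (s.sum - msTop s (Multiset.card s - t)) := by
  unfold msTop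
  rw [sort_map_sub, ← List.map_take, list_sum_map_sub]
  have hlen : (s.sort (· ≥ ·)).length = Multiset.card s := Multiset.length_sort _
  have hts : t ≤ (s.sort (· ≥ ·)).reverse.length := by simpa [hlen] using ht
  have h1 : ((s.sort (· ≥ ·)).reverse.take t).length = t := by
    simpa using hts
  have h2 : (s.sort (· ≥ ·)).reverse.take t
      = ((s.sort (· ≥ ·)).drop (Multiset.card s - t)).reverse := by
    rw [List.take_reverse, hlen]
  have hsum : ((s.sort (· ≥ ·)).reverse.take t).sum
      = s.sum - ((s.sort (· ≥ ·)).take (Multiset.card s - t)).sum := by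
    rw [h2, List.sum_reverse]
    have := List.take_append_drop (Multiset.card s - t) (s.sort (· ≥ ·))
    have hs : s.sum = ((s.sort (· ≥ ·)).take (Multiset.card s - t)).sum
        + ((s.sort (· ≥ ·)).drop (Multiset.card s - t)).sum := by
      conv_lhs => rw [← Multiset.sort_eq s (· ≥ ·)]
      rw [Multiset.sum_coe, ← List.sum_append, List.take_append_drop]
    linarith
  rw [h1, hsum]
open Matrix in
lemma conj_det {m : Type} [Fintype m] [DecidableEq m]
    (U : Matrix.unitaryGroup m ℝ) (M : Matrix m m ℝ) :
    ((U : Matrix m m ℝ) * M * star (U : Matrix m m ℝ)).det = M.det := by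
  rw [det_mul, det_mul, mul_comm, ← mul_assoc, ← det_mul,
    (Matrix.mem_unitaryGroup_iff').mp U.2, det_one, one_mul]

open Matrix in
lemma det_smul_one_sub {m : Type} [Fintype m] [DecidableEq m]
    {A : Matrix m m ℝ} (hA : A.IsHermitian) (x : ℝ) :
    (x • (1 : Matrix m m ℝ) - A).det = ∏ i, (x - hA.eigenvalues i) := by
  have h1 : x • (1 : Matrix m m ℝ)
      = (hA.eigenvectorUnitary : Matrix m m ℝ) * (x • 1)
        * star (hA.eigenvectorUnitary : Matrix m m ℝ) := by
    rw [Matrix.mul_smul, Matrix.mul_one, Matrix.smul_mul,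
      (Matrix.mem_unitaryGroup_iff).mp hA.eigenvectorUnitary.2]
  have h2 : x • (1 : Matrix m m ℝ) - A
      = (hA.eigenvectorUnitary : Matrix m m ℝ)
        * (x • 1 - Matrix.diagonal (RCLike.ofReal ∘ hA.eigenvalues))
        * star (hA.eigenvectorUnitary : Matrix m m ℝ) := by
    rw [Matrix.mul_sub, Matrix.sub_mul, ← h1]; exact congrArg _ hA.spectral_theorem
  rw [h2, conj_det]
  rw [Matrix.smul_one_eq_diagonal, Matrix.diagonal_sub, Matrix.det_diagonal]
  simp

open Matrix in
lemma det_smul_one_add {m : Type} [Fintype m] [DecidableEq m]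
    {A : Matrix m m ℝ} (hA : A.IsHermitian) (x : ℝ) :
    (x • (1 : Matrix m m ℝ) + A).det = ∏ i, (x + hA.eigenvalues i) := by
  have h1 : x • (1 : Matrix m m ℝ)
      = (hA.eigenvectorUnitary : Matrix m m ℝ) * (x • 1)
        * star (hA.eigenvectorUnitary : Matrix m m ℝ) := by
    rw [Matrix.mul_smul, Matrix.mul_one, Matrix.smul_mul,
      (Matrix.mem_unitaryGroup_iff).mp hA.eigenvectorUnitary.2]
  have h2 : x • (1 : Matrix m m ℝ) + A
      = (hA.eigenvectorUnitary : Matrix m m ℝ)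
        * (x • 1 + Matrix.diagonal (RCLike.ofReal ∘ hA.eigenvalues))
        * star (hA.eigenvectorUnitary : Matrix m m ℝ) := by
    rw [Matrix.mul_add, Matrix.add_mul, ← h1]; exact congrArg _ hA.spectral_theorem
  rw [h2, conj_det]
  rw [Matrix.smul_one_eq_diagonal, Matrix.diagonal_add, Matrix.det_diagonal]
  simp

open Matrix in
lemma trace_eq_sum_eigs {m : Type} [Fintype m] [DecidableEq m]
    {A : Matrix m m ℝ} (hA : A.IsHermitian) :
    A.trace = ∑ i, hA.eigenvalues i := by
  conv_lhs => rw [hA.spectral_theorem]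
  rw [Unitary.conjStarAlgAut_apply, Matrix.trace_mul_cycle,
    (Matrix.mem_unitaryGroup_iff').mp hA.eigenvectorUnitary.2, Matrix.one_mul,
    Matrix.trace_diagonal]
  simp


open SimpleGraph Matrix

variable {n : ℕ}

/-- Eigenvalue multiset of the Laplacian. -/
noncomputable def eigMS (G : SimpleGraph (Fin n)) : Multiset ℝ :=
  letI := Classical.decRel G.Adj
  Finset.univ.val.map ((SimpleGraph.posSemidef_lapMatrix ℝ G).isHermitian.eigenvalues)

lemma card_eigMS (G : SimpleGraph (Fin n)) : Multiset.card (eigMS G) = n := by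
  simp [eigMS]

lemma eigMS_nonneg (G : SimpleGraph (Fin n)) : ∀ a ∈ eigMS G, 0 ≤ a := by
  letI := Classical.decRel G.Adj
  intro a ha
  unfold eigMS at ha
  rw [Multiset.mem_map] at ha
  obtain ⟨i, _, rfl⟩ := ha
  exact (SimpleGraph.posSemidef_lapMatrix ℝ G).eigenvalues_nonneg i

lemma lapMatrix_diag (G : SimpleGraph (Fin n)) [DecidableRel G.Adj] (i : Fin n) :
    G.lapMatrix ℝ i i = (G.degree i : ℝ) := by
  simp [lapMatrix, degMatrix, Matrix.diagonal]

lemma sum_eigMS (G : SimpleGraph (Fin n)) :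
    (eigMS G).sum = 2 * (letI := Classical.decRel G.Adj; G.edgeFinset.card : ℕ) := by
  letI := Classical.decRel G.Adj
  have h1 : (eigMS G).sum
      = ∑ i, (SimpleGraph.posSemidef_lapMatrix ℝ G).isHermitian.eigenvalues i := rfl
  rw [h1, ← trace_eq_sum_eigs]
  have h2 : (G.lapMatrix ℝ).trace = ∑ i, (G.degree i : ℝ) := by
    rw [Matrix.trace]
    simp only [Matrix.diag]
    exact Finset.sum_congr rfl fun i _ => lapMatrix_diag G i
  rw [h2, ← Nat.cast_sum, G.sum_degrees_eq_twice_card_edges]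
  push_cast
  ring

lemma sum_eigMS_real (G : SimpleGraph (Fin n)) :
    (eigMS G).sum = 2 * (edgeCount G : ℝ) := by
  rw [sum_eigMS]
  rfl

lemma lapMatrix_compl (G : SimpleGraph (Fin n)) :
    letI := Classical.decRel G.Adj
    letI := Classical.decRel Gᶜ.Adj
    Gᶜ.lapMatrix ℝ = (n : ℝ) • (1 : Matrix (Fin n) (Fin n) ℝ)
      - vecMulVec (fun _ => 1) (fun _ => 1) - G.lapMatrix ℝ := by
  letI := Classical.decRel G.Adj
  letI := Classical.decRel Gᶜ.Adj
  ext i j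
  by_cases hij : i = j
  · subst hij
    have hlt : G.degree i < n := by
      simpa using G.degree_lt_card_verts i
    have hd : Gᶜ.degree i = n - 1 - G.degree i := by
      simpa using G.degree_compl (v := i)
    simp only [Matrix.sub_apply, Matrix.smul_apply, Matrix.one_apply_eq, vecMulVec, Matrix.of_apply,
      smul_eq_mul, mul_one, one_mul, lapMatrix_diag]
    rw [hd, Nat.cast_sub (by omega), Nat.cast_sub (by omega)]
    push_cast
    ring
  · have h1 : G.lapMatrix ℝ i j = -(if G.Adj i j then (1:ℝ) else 0) := by
      simp [lapMatrix, degMatrix, Matrix.diagonal, hij]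
    have h2 : Gᶜ.lapMatrix ℝ i j = -(if Gᶜ.Adj i j then (1:ℝ) else 0) := by
      simp [lapMatrix, degMatrix, Matrix.diagonal, hij]
    simp only [Matrix.sub_apply, Matrix.smul_apply, Matrix.one_apply_ne hij, vecMulVec,
      Matrix.of_apply, smul_eq_mul, mul_zero, mul_one, one_mul]
    rw [h2, h1]
    by_cases hadj : G.Adj i j
    · simp [hadj, SimpleGraph.compl_adj, hij]
    · simp [hadj, SimpleGraph.compl_adj, hij]

open Matrix in
lemma det_add_vecMulVec {m : Type} [Fintype m] [DecidableEq m]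
    {M : Matrix m m ℝ} (hM : IsUnit M.det) (u v : m → ℝ) :
    (M + vecMulVec u v).det = M.det * (1 + v ⬝ᵥ (M⁻¹ *ᵥ u)) := by
  haveI : Invertible (1 : Matrix Unit Unit ℝ) := invertibleOne
  have : Invertible M := M.invertibleOfIsUnitDet hM
  have h1 : (fromBlocks M (replicateCol Unit u) (-(replicateRow Unit v)) (1 : Matrix Unit Unit ℝ)).det
      = (M + vecMulVec u v).det := by
    rw [det_fromBlocks₂₂, det_one, one_mul, invOf_one, Matrix.mul_one,
      vecMulVec_eq Unit, Matrix.mul_neg, sub_neg_eq_add]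
  have h2 : (fromBlocks M (replicateCol Unit u) (-(replicateRow Unit v)) (1 : Matrix Unit Unit ℝ)).det
      = M.det * (1 + v ⬝ᵥ (M⁻¹ *ᵥ u)) := by
    rw [det_fromBlocks₁₁, invOf_eq_nonsing_inv]
    congr 1
    rw [det_unique]
    simp only [Matrix.sub_apply, Matrix.one_apply_eq, Matrix.neg_mul, Matrix.neg_apply,
      sub_neg_eq_add]
    congr 1
    rw [Matrix.mul_assoc]
    rw [show (M⁻¹ * replicateCol Unit u : Matrix m Unit ℝ) = replicateCol Unit (M⁻¹ *ᵥ u) by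
      ext i j; simp [Matrix.mul_apply, Matrix.mulVec, dotProduct]]
    exact replicateRow_mul_replicateCol_apply _ _ _ _
  rw [← h1, h2]

lemma eigMS_compl (G : SimpleGraph (Fin n)) :
    (n : ℝ) ::ₘ eigMS Gᶜ = (0:ℝ) ::ₘ (eigMS G).map (fun a => (n:ℝ) - a) := by
  letI := Classical.decRel G.Adj
  letI := Classical.decRel Gᶜ.Adj
  have hG := (SimpleGraph.posSemidef_lapMatrix ℝ G).isHermitian
  have hGc := (SimpleGraph.posSemidef_lapMatrix ℝ Gᶜ).isHermitian
  set u : Fin n → ℝ := fun _ => 1 with hu_def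
  have hu : G.lapMatrix ℝ *ᵥ u = 0 := G.lapMatrix_mulVec_const_eq_zero
  have hdot : u ⬝ᵥ u = (n : ℝ) := by simp [dotProduct, hu_def]
  set P : Polynomial ℝ :=
    (((n : ℝ) ::ₘ eigMS Gᶜ).map (fun a => Polynomial.X - Polynomial.C a)).prod with hP
  set Q : Polynomial ℝ :=
    (((0:ℝ) ::ₘ (eigMS G).map (fun a => (n:ℝ) - a)).map
      (fun a => Polynomial.X - Polynomial.C a)).prod with hQ
  have evalP : ∀ x : ℝ, P.eval x = (x - n) * ∏ i, (x - hGc.eigenvalues i) := by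
    intro x
    rw [hP, Polynomial.eval_multiset_prod, Multiset.map_map, Multiset.map_cons,
      Multiset.prod_cons]
    congr 1
    · simp
    · unfold eigMS
      rw [Multiset.map_map]
      congr 1
      ext i
      simp [Function.comp]
  have evalQ : ∀ x : ℝ, Q.eval x = x * ∏ i, ((x - n) + hG.eigenvalues i) := by
    intro x
    rw [hQ, Polynomial.eval_multiset_prod, Multiset.map_map, Multiset.map_cons,
      Multiset.prod_cons]
    congr 1
    · simp
    · unfold eigMS
      rw [Multiset.map_map, Multiset.map_map]
      congr 1
      ext i
      simp [Function.comp]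
      ring_nf
  have key : ∀ x : ℝ, x ≠ n → (∀ i, x ≠ n - hG.eigenvalues i) → P.eval x = Q.eval x := by
    intro x hx hxi
    set M : Matrix (Fin n) (Fin n) ℝ := (x - n) • 1 + G.lapMatrix ℝ with hM
    have hdetM : M.det = ∏ i, ((x - n) + hG.eigenvalues i) := det_smul_one_add hG (x - n)
    have hne : M.det ≠ 0 := by
      rw [hdetM]
      rw [Finset.prod_ne_zero_iff]
      intro i _
      intro hzero
      exact hxi i (by linarith)
    have hMunit : IsUnit M.det := isUnit_iff_ne_zero.mpr hne
    have hMu : M *ᵥ u = (x - n) • u := by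
      rw [hM, Matrix.add_mulVec, Matrix.smul_mulVec, Matrix.one_mulVec, hu, add_zero]
    have hMinvu : M⁻¹ *ᵥ u = (x - n)⁻¹ • u := by
      have h3 : M⁻¹ *ᵥ (M *ᵥ u) = u := by
        rw [Matrix.mulVec_mulVec, Matrix.nonsing_inv_mul _ hMunit, Matrix.one_mulVec]
      rw [hMu, Matrix.mulVec_smul] at h3
      exact ((inv_smul_eq_iff₀ (sub_ne_zero.mpr hx)).mpr h3.symm).symm
    have hxsub : x • (1 : Matrix (Fin n) (Fin n) ℝ) - Gᶜ.lapMatrix ℝ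
        = M + vecMulVec u u := by
      rw [lapMatrix_compl G, hM, sub_smul]
      abel
    have hdet2 : (x • (1 : Matrix (Fin n) (Fin n) ℝ) - Gᶜ.lapMatrix ℝ).det
        = M.det * (1 + (x - n)⁻¹ * n) := by
      rw [hxsub, det_add_vecMulVec hMunit, hMinvu, dotProduct_smul, hdot, smul_eq_mul]
    have hfield : (x - n) * (1 + (x - n)⁻¹ * n) = x := by
      have hxn : x - (n:ℝ) ≠ 0 := sub_ne_zero.mpr hx
      field_simp
      ring
    rw [evalP, evalQ, ← det_smul_one_sub hGc x, hdet2, ← hdetM]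
    calc (x - n) * (M.det * (1 + (x - n)⁻¹ * n))
        = M.det * ((x - n) * (1 + (x - n)⁻¹ * n)) := by ring
      _ = M.det * x := by rw [hfield]
      _ = x * M.det := by ring
  have hPQ : P = Q := by
    have hbad : ({(n:ℝ)} ∪ Set.range (fun i => (n:ℝ) - hG.eigenvalues i)).Finite :=
      (Set.finite_singleton _).union (Set.finite_range _)
    have hsub : ({(n:ℝ)} ∪ Set.range (fun i => (n:ℝ) - hG.eigenvalues i))ᶜ
        ⊆ {x : ℝ | (P - Q).IsRoot x} := by
      intro x hx
      simp only [Set.mem_compl_iff, Set.mem_union, Set.mem_singleton_iff,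
        Set.mem_range, not_or, not_exists] at hx
      have := key x hx.1 (fun i => fun h => hx.2 i h.symm)
      simp only [Set.mem_setOf_eq, Polynomial.IsRoot, Polynomial.eval_sub]
      linarith
    have hinf : {x : ℝ | (P - Q).IsRoot x}.Infinite :=
      Set.Infinite.mono hsub hbad.infinite_compl
    have := Polynomial.eq_zero_of_infinite_isRoot _ hinf
    exact sub_eq_zero.mp this
  have hroots := congrArg Polynomial.roots hPQ
  rwa [Polynomial.roots_multiset_prod_X_sub_C, Polynomial.roots_multiset_prod_X_sub_C] at hroots

lemma lapEigSum_eq_msTop (G : SimpleGraph (Fin n)) (t : ℕ) :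
    lapEigSum G t = msTop (eigMS G) t := rfl

lemma edgeCount_le (G : SimpleGraph (Fin n)) : edgeCount G ≤ n.choose 2 := by
  letI := Classical.decRel G.Adj
  have := G.card_edgeFinset_le_card_choose_two
  simpa [edgeCount] using this

lemma edgeCount_compl_real (G : SimpleGraph (Fin n)) :
    (edgeCount G : ℝ) + (edgeCount Gᶜ : ℝ) = (n.choose 2 : ℝ) := by
  letI := Classical.decRel G.Adj
  letI := Classical.decRel Gᶜ.Adj
  have h1 := G.sum_degrees_eq_twice_card_edges
  have h2 := Gᶜ.sum_degrees_eq_twice_card_edges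
  have h3 : ∑ v, G.degree v + ∑ v, Gᶜ.degree v = n * (n - 1) := by
    rw [← Finset.sum_add_distrib]
    have : ∀ v : Fin n, G.degree v + Gᶜ.degree v = n - 1 := by
      intro v
      have hd : Gᶜ.degree v = n - 1 - G.degree v := by
        simpa using G.degree_compl (v := v)
      have hlt : G.degree v < n := by simpa using G.degree_lt_card_verts v
      omega
    rw [Finset.sum_congr rfl (fun v _ => this v)]
    simp [mul_comm]
  have hcast : ((edgeCount G : ℝ) + (edgeCount Gᶜ : ℝ)) * 2 = (n : ℝ) * ((n:ℝ) - 1) := by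
    have heG : edgeCount G = G.edgeFinset.card := rfl
    have heGc : edgeCount Gᶜ = Gᶜ.edgeFinset.card := rfl
    have : (2 * edgeCount G + 2 * edgeCount Gᶜ : ℕ) = n * (n-1) := by
      rw [heG, heGc, ← h3, ← h1, ← h2]
    have := congrArg (fun k : ℕ => (k : ℝ)) this
    push_cast at this
    rcases Nat.eq_zero_or_pos n with rfl | hn
    · norm_num at this ⊢
      linarith
    · rw [Nat.cast_sub (by omega)] at this
      push_cast at this
      linarith
  rw [Nat.cast_choose_two]
  linarith

lemma arith_choose (s m n : ℕ) (h : s + m = n) :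
    (s : ℝ) * (n : ℝ) + ((m.choose 2 : ℕ) : ℝ)
      = ((n.choose 2 : ℕ) : ℝ) + (((s+1).choose 2 : ℕ) : ℝ) := by
  subst h
  rw [Nat.cast_choose_two, Nat.cast_choose_two, Nat.cast_choose_two]
  push_cast
  ring

lemma master_identity (G : SimpleGraph (Fin n)) {s : ℕ} (hs : s < n) :
    msTop (eigMS Gᶜ) s
      = (s : ℝ) * (n : ℝ) - 2 * (edgeCount G : ℝ) + msTop (eigMS G) (n - 1 - s) := by
  have h4 := eigMS_compl G
  have hle : ∀ b ∈ eigMS Gᶜ, b ≤ (n : ℝ) := by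
    intro b hb
    have hmem : b ∈ (0:ℝ) ::ₘ (eigMS G).map (fun a => (n:ℝ) - a) := by
      rw [← h4]; exact Multiset.mem_cons_of_mem hb
    rcases Multiset.mem_cons.mp hmem with rfl | hmem
    · positivity
    · rw [Multiset.mem_map] at hmem
      obtain ⟨a, ha, rfl⟩ := hmem
      have := eigMS_nonneg G a ha
      linarith
  have hge : ∀ b ∈ (eigMS G).map (fun a => (n:ℝ) - a), 0 ≤ b := by
    intro b hb
    have hmem : b ∈ (n:ℝ) ::ₘ eigMS Gᶜ := by
      rw [h4]; exact Multiset.mem_cons_of_mem hb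
    rcases Multiset.mem_cons.mp hmem with rfl | hmem
    · positivity
    · exact eigMS_nonneg Gᶜ b hmem
  have hcongr := congrArg (fun m => msTop m (s+1)) h4
  rw [msTop_cons_max hle s] at hcongr
  rw [msTop_cons_min hge (by rw [Multiset.card_map, card_eigMS]; omega)] at hcongr
  rw [msTop_map_sub (n:ℝ) (eigMS G) (by rw [card_eigMS]; omega)] at hcongr
  rw [card_eigMS, sum_eigMS_real] at hcongr
  have hsub : n - (s+1) = n - 1 - s := by omega
  rw [hsub] at hcongr
  push_cast at hcongr
  linarith

lemma forward_brouwer (G : SimpleGraph (Fin n))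
    (h : ∀ t ∈ Finset.Icc 1 n, BrouwerIneq G t) :
    ∀ t ∈ Finset.Icc 1 n, BrouwerIneq Gᶜ t := by
  intro s hsmem
  rw [Finset.mem_Icc] at hsmem
  obtain ⟨hs1, hsn⟩ := hsmem
  unfold BrouwerIneq
  rw [lapEigSum_eq_msTop]
  rcases eq_or_lt_of_le hsn with heq | hlt
  · subst heq
    have hfull := msTop_card (eigMS Gᶜ)
    rw [card_eigMS] at hfull
    rw [hfull, sum_eigMS_real]
    have hle : edgeCount Gᶜ ≤ s.choose 2 := edgeCount_le Gᶜ
    have hc : ((s.choose 2 : ℕ) : ℝ) ≤ (((s+1).choose 2 : ℕ) : ℝ) :=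
      Nat.cast_le.mpr (Nat.choose_le_choose 2 (by omega))
    have hle' : ((edgeCount Gᶜ : ℕ) : ℝ) ≤ ((s.choose 2 : ℕ) : ℝ) := Nat.cast_le.mpr hle
    linarith
  · rw [master_identity G hlt]
    set t0 := n - 1 - s with ht0def
    have ht0 : msTop (eigMS G) t0 ≤ (edgeCount G : ℝ) + (((t0+1).choose 2 : ℕ) : ℝ) := by
      rcases Nat.eq_zero_or_pos t0 with h0 | hpos
      · rw [h0]
        have : msTop (eigMS G) 0 = 0 := rfl
        rw [this]
        positivity
      · have hb := h t0 (Finset.mem_Icc.mpr ⟨hpos, by omega⟩)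
        unfold BrouwerIneq at hb
        rw [lapEigSum_eq_msTop] at hb
        exact hb
    have hedge := edgeCount_compl_real G
    have harith := arith_choose s (t0 + 1) n (by omega)
    push_cast at *
    linarith

/-- A graph satisfies all Brouwer inequalities iff its complement does. -/
theorem brouwer_iff_brouwer_compl (n : ℕ) (G : SimpleGraph (Fin n)) :
    (∀ t ∈ Finset.Icc 1 n, BrouwerIneq G t) ↔ (∀ t ∈ Finset.Icc 1 n, BrouwerIneq Gᶜ t) := by
  constructor
  · exact forward_brouwer G
  · intro h
    have := forward_brouwer Gᶜ h
    simpa [compl_compl] using this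
end

section
/- Let G₁ and G₂ be finite simple graphs on disjoint vertex sets with n₁ and n₂ vertices respectively, and let G = G₁ ⊔ G₂ be their disjoint union. If G₁ satisfies the t-th Brouwer inequality for every t ∈ {1,…,n₁} and G₂ satisfies the t-th Brouwer inequality for every t ∈ {1,…,n₂}, then G satisfies the t-th Brouwer inequality for every t ∈ {1,…,n₁+n₂}. -/
open Polynomial Matrix


lemma charpoly_conj_unitary {m : Type} [Fintype m] [DecidableEq m]
    (U A : Matrix m m ℝ) (h : U * star U = 1) :
    (U * A * star U).charpoly = A.charpoly := by
  have hmap : (C : ℝ →+* ℝ[X]).mapMatrix U * (C : ℝ →+* ℝ[X]).mapMatrix (star U) = 1 := by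
    rw [← _root_.map_mul, h, _root_.map_one]
  have hc : charmatrix (U * A * star U)
      = (C : ℝ →+* ℝ[X]).mapMatrix U * charmatrix A * (C : ℝ →+* ℝ[X]).mapMatrix (star U) := by
    rw [charmatrix, charmatrix, Matrix.mul_sub, Matrix.sub_mul, _root_.map_mul, _root_.map_mul]
    congr 1
    rw [mul_assoc, scalar_commute (X : ℝ[X]) (Commute.all X) _, ← mul_assoc, hmap, one_mul]
  rw [Matrix.charpoly, Matrix.charpoly, hc, det_mul, det_mul]
  have : ((C : ℝ →+* ℝ[X]).mapMatrix U).det * ((C : ℝ →+* ℝ[X]).mapMatrix (star U)).det = 1 := by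
    rw [← det_mul, hmap, det_one]
  calc ((C : ℝ →+* ℝ[X]).mapMatrix U).det * (charmatrix A).det
        * ((C : ℝ →+* ℝ[X]).mapMatrix (star U)).det
      = ((C : ℝ →+* ℝ[X]).mapMatrix U).det * ((C : ℝ →+* ℝ[X]).mapMatrix (star U)).det
        * (charmatrix A).det := by ring
    _ = (charmatrix A).det := by rw [this, one_mul]

lemma charpoly_diagonal_real {m : Type} [Fintype m] [DecidableEq m] (v : m → ℝ) :
    (diagonal v).charpoly = ∏ i, (X - C (v i)) := by
  have : charmatrix (diagonal v) = diagonal (fun i => (X : ℝ[X]) - C (v i)) := by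
    ext i j
    by_cases hij : i = j
    · subst hij; simp
    · simp [charmatrix_apply_ne _ _ _ hij, diagonal_apply_ne _ hij, diagonal_apply_ne v hij]
  rw [Matrix.charpoly, this, det_diagonal]

lemma herm_roots {m : Type} [Fintype m] [DecidableEq m] {A : Matrix m m ℝ}
    (hA : A.IsHermitian) :
    A.charpoly.roots = Finset.univ.val.map hA.eigenvalues := by
  have hU : (hA.eigenvectorUnitary : Matrix m m ℝ) * star (hA.eigenvectorUnitary : Matrix m m ℝ) = 1 :=
    (Matrix.mem_unitaryGroup_iff).mp (hA.eigenvectorUnitary).2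
  have hdiag : diagonal ((RCLike.ofReal : ℝ → ℝ) ∘ hA.eigenvalues) = diagonal hA.eigenvalues := by
    congr 1
  have hch : A.charpoly
      = (Multiset.map (fun a => X - C a) (Finset.univ.val.map hA.eigenvalues)).prod := by
    calc A.charpoly = (diagonal hA.eigenvalues).charpoly := by
          conv_lhs => rw [hA.spectral_theorem]
          rw [hdiag]
          exact charpoly_conj_unitary _ _ hU
      _ = (∏ i, (X - C (hA.eigenvalues i))) := charpoly_diagonal_real _
      _ = (Multiset.map (fun a => X - C a) (Finset.univ.val.map hA.eigenvalues)).prod := by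
          rw [Multiset.map_map]
          rfl
  rw [hch, roots_multiset_prod_X_sub_C]

noncomputable def mySum (s : Multiset ℝ) (t : ℕ) : ℝ := ((s.sort (· ≥ ·)).take t).sum

lemma take_cons_sum_le (l : List ℝ) (a : ℝ) (ha : ∀ x ∈ l, x ≤ a) (k : ℕ)
    (hk : k ≤ l.length) : (l.take k).sum ≤ ((a :: l).take k).sum := by
  cases k with
  | zero => simp
  | succ k =>
    have hkl : k < l.length := hk
    rw [List.sum_take_succ l k hkl, List.take_succ_cons]
    simp only [List.sum_cons]
    have h1 : l[k] ≤ a := ha _ (List.getElem_mem hkl)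
    have h2 : (l.take k).sum ≤ (l.take k).sum := le_refl _
    linarith

lemma sublist_sum_le_take {l m : List ℝ} (h : m.Sublist l) (hl : l.Pairwise (· ≥ ·)) :
    m.sum ≤ (l.take m.length).sum := by
  induction h with
  | slnil => simp
  | @cons l₁ l₂ a h ih =>
    have hs := List.pairwise_cons.mp hl
    refine le_trans (ih hs.2) ?_
    exact take_cons_sum_le l₂ a (fun x hx => hs.1 x hx) _ h.length_le
  | @cons_cons l₁ l₂ a h ih =>
    have hs := List.pairwise_cons.mp hl
    simp only [List.length_cons, List.take_cons, List.sum_cons]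
    rw [List.take_succ_cons, List.sum_cons]
    linarith [ih hs.2]

lemma sum_le_mySum {u s : Multiset ℝ} (h : u ≤ s) : u.sum ≤ mySum s (Multiset.card u) := by
  haveI : IsAntisymm ℝ (· ≥ ·) := ⟨fun a b h1 h2 => le_antisymm h2 h1⟩
  have hsub : (u.sort (· ≥ ·)).Sublist (s.sort (· ≥ ·)) := by
    apply List.sublist_of_subperm_of_pairwise _ (Multiset.pairwise_sort _ _) (Multiset.pairwise_sort _ _)
    rw [← Multiset.coe_le, Multiset.sort_eq, Multiset.sort_eq]
    exact h
  have := sublist_sum_le_take hsub (Multiset.pairwise_sort _ _)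
  rwa [Multiset.length_sort, show (u.sort (· ≥ ·)).sum = u.sum from by
    rw [← Multiset.sum_coe, Multiset.sort_eq]] at this

lemma mySum_split (s₁ s₂ : Multiset ℝ) (t : ℕ) (ht : t ≤ Multiset.card s₁ + Multiset.card s₂) :
    ∃ t₁ t₂ : ℕ, t₁ + t₂ = t ∧ t₁ ≤ Multiset.card s₁ ∧ t₂ ≤ Multiset.card s₂ ∧
      mySum (s₁ + s₂) t ≤ mySum s₁ t₁ + mySum s₂ t₂ := by
  classical
  set l := (s₁ + s₂).sort (· ≥ ·) with hl
  set u : Multiset ℝ := ↑(l.take t) with hu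
  have hul : u ≤ s₁ + s₂ := by
    rw [hu, ← Multiset.sort_eq (s₁ + s₂) (· ≥ ·), Multiset.coe_le]
    exact (List.take_sublist t l).subperm
  have hcard : Multiset.card u = t := by
    rw [hu]
    simp only [Multiset.coe_card, List.length_take]
    rw [hl]
    simp [Multiset.length_sort]
    omega
  set u₁ : Multiset ℝ := u ∩ s₁ with hu1
  set u₂ : Multiset ℝ := u - s₁ with hu2
  have hsplit : u₂ + u₁ = u := Multiset.sub_add_inter u s₁
  have h1 : u₁ ≤ s₁ := Multiset.inter_le_right
  have h2 : u₂ ≤ s₂ := by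
    rw [hu2, Multiset.sub_le_iff_le_add]
    rwa [add_comm s₁ s₂] at hul
  refine ⟨Multiset.card u₁, Multiset.card u₂, ?_, Multiset.card_le_card h1,
    Multiset.card_le_card h2, ?_⟩
  · rw [add_comm, ← Multiset.card_add, hsplit, hcard]
  · have hsum : mySum (s₁ + s₂) t = u.sum := by
      rw [hu]; simp [mySum, hl]
    rw [hsum, ← hsplit, Multiset.sum_add]
    have := sum_le_mySum h1
    have := sum_le_mySum h2
    linarith

lemma choose_two_add (a b : ℕ) : (a + 1).choose 2 + (b + 1).choose 2 ≤ (a + b + 1).choose 2 := by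
  induction b with
  | zero => simp [Nat.choose]
  | succ b ih =>
    have e1 : (b + 2).choose 2 = (b + 1).choose 2 + (b + 1) := by
      rw [show b + 2 = (b+1) + 1 from rfl, Nat.choose_succ_succ]
      simp [Nat.choose_one_right, Nat.add_comm]
    have e2 : (a + (b+1) + 1).choose 2 = (a + b + 1).choose 2 + (a + b + 1) := by
      rw [show a + (b+1) + 1 = (a + b + 1) + 1 from rfl, Nat.choose_succ_succ]
      simp [Nat.choose_one_right, Nat.add_comm]
    rw [show b + 1 + 1 = b + 2 from rfl, e1, e2]
    omega

lemma degree_sum_inl {α β : Type} [Fintype α] [Fintype β] [DecidableEq α] [DecidableEq β]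
    (G : SimpleGraph α) (H : SimpleGraph β)
    [DecidableRel G.Adj] [DecidableRel (G.sum H).Adj] (v : α) :
    (G.sum H).degree (Sum.inl v) = G.degree v := by
  unfold SimpleGraph.degree
  rw [show (G.sum H).neighborFinset (Sum.inl v)
      = (G.neighborFinset v).map ⟨Sum.inl, Sum.inl_injective⟩ from ?_]
  · rw [Finset.card_map]
  · ext w
    cases w with
    | inl u => simp [SimpleGraph.mem_neighborFinset]
    | inr u => simp [SimpleGraph.mem_neighborFinset]

lemma degree_sum_inr {α β : Type} [Fintype α] [Fintype β] [DecidableEq α] [DecidableEq β]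
    (G : SimpleGraph α) (H : SimpleGraph β)
    [DecidableRel H.Adj] [DecidableRel (G.sum H).Adj] (v : β) :
    (G.sum H).degree (Sum.inr v) = H.degree v := by
  unfold SimpleGraph.degree
  rw [show (G.sum H).neighborFinset (Sum.inr v)
      = (H.neighborFinset v).map ⟨Sum.inr, Sum.inr_injective⟩ from ?_]
  · rw [Finset.card_map]
  · ext w
    cases w with
    | inl u => simp [SimpleGraph.mem_neighborFinset]
    | inr u => simp [SimpleGraph.mem_neighborFinset]

lemma lap_sum_blocks {α β : Type} [Fintype α] [Fintype β] [DecidableEq α] [DecidableEq β]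
    (G : SimpleGraph α) (H : SimpleGraph β)
    [DecidableRel G.Adj] [DecidableRel H.Adj] [DecidableRel (G.sum H).Adj] :
    SimpleGraph.lapMatrix ℝ (G.sum H)
      = fromBlocks (SimpleGraph.lapMatrix ℝ G) 0 0 (SimpleGraph.lapMatrix ℝ H) := by
  ext i j
  cases i with
  | inl a =>
    cases j with
    | inl b =>
      by_cases hab : a = b
      · subst hab
        simp [SimpleGraph.lapMatrix, SimpleGraph.degMatrix, fromBlocks, degree_sum_inl]
      · have : Sum.inl (β := β) a ≠ Sum.inl b := by simp [hab]
        simp [SimpleGraph.lapMatrix, SimpleGraph.degMatrix, fromBlocks,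
          Matrix.diagonal_apply_ne _ this, Matrix.diagonal_apply_ne _ hab]
    | inr b =>
      simp [SimpleGraph.lapMatrix, SimpleGraph.degMatrix, fromBlocks,
        Matrix.diagonal_apply_ne]
  | inr a =>
    cases j with
    | inl b =>
      simp [SimpleGraph.lapMatrix, SimpleGraph.degMatrix, fromBlocks,
        Matrix.diagonal_apply_ne]
    | inr b =>
      by_cases hab : a = b
      · subst hab
        simp [SimpleGraph.lapMatrix, SimpleGraph.degMatrix, fromBlocks, degree_sum_inr]
      · have : Sum.inr (α := α) a ≠ Sum.inr b := by simp [hab]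
        simp [SimpleGraph.lapMatrix, SimpleGraph.degMatrix, fromBlocks,
          Matrix.diagonal_apply_ne _ this, Matrix.diagonal_apply_ne _ hab]

lemma edge_sum {α β : Type} [Fintype α] [Fintype β] [DecidableEq α] [DecidableEq β]
    (G : SimpleGraph α) (H : SimpleGraph β)
    [DecidableRel G.Adj] [DecidableRel H.Adj] [DecidableRel (G.sum H).Adj] :
    (G.sum H).edgeFinset.card = G.edgeFinset.card + H.edgeFinset.card := by
  have h := SimpleGraph.sum_degrees_eq_twice_card_edges (G.sum H)
  rw [Fintype.sum_sum_type] at h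
  simp only [degree_sum_inl, degree_sum_inr] at h
  rw [SimpleGraph.sum_degrees_eq_twice_card_edges G,
    SimpleGraph.sum_degrees_eq_twice_card_edges H] at h
  omega

noncomputable def eigMul {V : Type} [Fintype V] [DecidableEq V] (G : SimpleGraph V) : Multiset ℝ :=
  letI := Classical.decRel G.Adj
  Finset.univ.val.map (SimpleGraph.posSemidef_lapMatrix ℝ G).isHermitian.eigenvalues

lemma lapEigSum_eq_mySum {V : Type} [Fintype V] [DecidableEq V] (G : SimpleGraph V) (t : ℕ) :
    lapEigSum G t = mySum (eigMul G) t := rfl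

lemma eigMul_eq_roots {V : Type} [Fintype V] [DecidableEq V] (G : SimpleGraph V) :
    eigMul G = (letI := Classical.decRel G.Adj; (SimpleGraph.lapMatrix ℝ G).charpoly.roots) := by
  unfold eigMul
  exact (herm_roots _).symm

lemma card_eigMul {V : Type} [Fintype V] [DecidableEq V] (G : SimpleGraph V) :
    Multiset.card (eigMul G) = Fintype.card V := by
  unfold eigMul
  simp

lemma eigMul_sum_graph {n₁ n₂ : ℕ} (G₁ : SimpleGraph (Fin n₁)) (G₂ : SimpleGraph (Fin n₂)) :
    eigMul (G₁.sum G₂) = eigMul G₁ + eigMul G₂ := by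
  rw [eigMul_eq_roots, eigMul_eq_roots, eigMul_eq_roots]
  letI := Classical.decRel G₁.Adj
  letI := Classical.decRel G₂.Adj
  letI := Classical.decRel (G₁.sum G₂).Adj
  rw [lap_sum_blocks G₁ G₂, Matrix.charpoly_fromBlocks_zero₂₁,
    Polynomial.roots_mul (mul_ne_zero (Matrix.charpoly_monic _).ne_zero
      (Matrix.charpoly_monic _).ne_zero)]

lemma edgeCount_sum_graph {n₁ n₂ : ℕ} (G₁ : SimpleGraph (Fin n₁)) (G₂ : SimpleGraph (Fin n₂)) :
    edgeCount (G₁.sum G₂) = edgeCount G₁ + edgeCount G₂ := by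
  unfold edgeCount
  letI := Classical.decRel G₁.Adj
  letI := Classical.decRel G₂.Adj
  letI := Classical.decRel (G₁.sum G₂).Adj
  exact edge_sum G₁ G₂

/-- If two graphs on disjoint vertex sets satisfy all their Brouwer inequalities,
then so does their disjoint union. -/
theorem brouwer_disjoint_union (n₁ n₂ : ℕ)
    (G₁ : SimpleGraph (Fin n₁)) (G₂ : SimpleGraph (Fin n₂))
    (h₁ : ∀ t ∈ Finset.Icc 1 n₁, BrouwerIneq G₁ t)
    (h₂ : ∀ t ∈ Finset.Icc 1 n₂, BrouwerIneq G₂ t) :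
    ∀ t ∈ Finset.Icc 1 (n₁ + n₂), BrouwerIneq (G₁.sum G₂) t := by
  intro t ht
  rw [Finset.mem_Icc] at ht
  have hc₁ : Multiset.card (eigMul G₁) = n₁ := by rw [card_eigMul]; simp
  have hc₂ : Multiset.card (eigMul G₂) = n₂ := by rw [card_eigMul]; simp
  obtain ⟨t₁, t₂, htt, ht₁, ht₂, hle⟩ :=
    mySum_split (eigMul G₁) (eigMul G₂) t (by rw [hc₁, hc₂]; exact ht.2)
  rw [hc₁] at ht₁
  rw [hc₂] at ht₂
  have b₁ : mySum (eigMul G₁) t₁ ≤ (edgeCount G₁ : ℝ) + ((t₁ + 1).choose 2 : ℝ) := by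
    rcases Nat.eq_zero_or_pos t₁ with h0 | hpos
    · subst h0
      simp only [mySum, List.take_zero, List.sum_nil, Nat.zero_add, Nat.choose_self]
      positivity
    · have := h₁ t₁ (Finset.mem_Icc.mpr ⟨hpos, ht₁⟩)
      rwa [BrouwerIneq, lapEigSum_eq_mySum] at this
  have b₂ : mySum (eigMul G₂) t₂ ≤ (edgeCount G₂ : ℝ) + ((t₂ + 1).choose 2 : ℝ) := by
    rcases Nat.eq_zero_or_pos t₂ with h0 | hpos
    · subst h0
      simp only [mySum, List.take_zero, List.sum_nil, Nat.zero_add, Nat.choose_self]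
      positivity
    · have := h₂ t₂ (Finset.mem_Icc.mpr ⟨hpos, ht₂⟩)
      rwa [BrouwerIneq, lapEigSum_eq_mySum] at this
  have hch : ((t₁ + 1).choose 2 : ℝ) + ((t₂ + 1).choose 2 : ℝ) ≤ ((t + 1).choose 2 : ℝ) := by
    rw [← htt]
    exact_mod_cast choose_two_add t₁ t₂
  rw [BrouwerIneq, lapEigSum_eq_mySum, eigMul_sum_graph, edgeCount_sum_graph]
  push_cast
  linarith
end

section
/- Let G be a threshold graph on n vertices with c ≥ 1 cone vertices, and for each i ≥ 1 let d^T_i denote the number of vertices of G of degree at least i (the conjugate partition of the degree sequence). Then Σ_{i=1}^{c} d^T_i = e(G) + C(c+1, 2). -/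
/-- Degree of a vertex in a finite simple graph. -/
noncomputable def vertDegree {V : Type} [Fintype V] [DecidableEq V]
    (G : SimpleGraph V) (v : V) : ℕ :=
  letI := Classical.decRel G.Adj
  G.degree v

/-- The `i`-th entry of the conjugate partition of the degree sequence:
the number of vertices of degree at least `i`. -/
noncomputable def conjPart {V : Type} [Fintype V] [DecidableEq V]
    (G : SimpleGraph V) (i : ℕ) : ℕ :=
  (Finset.univ.filter fun v : V => i ≤ vertDegree G v).card

/-- The threshold graph on `Fin n` determined by the designation `b` of vertices as
cone vertices (`b i = true`) or isolated vertices: for `i < j`, the vertices `i` and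
`j` are adjacent iff `j` is a cone vertex.  (The designation of vertex `0` is
irrelevant.) -/
def thresholdGraph (n : ℕ) (b : Fin n → Bool) : SimpleGraph (Fin n) where
  Adj i j := (i < j ∧ b j) ∨ (j < i ∧ b i)
  symm := ⟨fun i j h => h.elim (fun h => Or.inr h) (fun h => Or.inl h)⟩
  loopless := ⟨fun i h => by
    rcases h with ⟨h, -⟩ | ⟨h, -⟩ <;> exact lt_irrefl _ h⟩

/-- The number of cone vertices of the threshold graph determined by `b`. -/
def coneCount (n : ℕ) (b : Fin n → Bool) : ℕ :=
  (Finset.univ.filter fun i : Fin n => 0 < (i : ℕ) ∧ b i).card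

lemma tg_deg_formula (n : ℕ) (b : Fin n → Bool) (v : Fin n) :
    vertDegree (thresholdGraph n b) v =
      (Finset.univ.filter fun j : Fin n => v < j ∧ b j = true).card +
      (if 0 < (v : ℕ) ∧ b v = true then (v : ℕ) else 0) := by
  classical
  have h1 : vertDegree (thresholdGraph n b) v
      = (Finset.univ.filter fun j : Fin n =>
          (v < j ∧ b j = true) ∨ (j < v ∧ b v = true)).card := by
    unfold vertDegree
    rw [SimpleGraph.degree, SimpleGraph.neighborFinset_eq_filter]
    congr 1
    ext j
    simp only [Finset.mem_filter, Finset.mem_univ, true_and]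
    simp [thresholdGraph]
  rw [h1, Finset.filter_or, Finset.card_union_of_disjoint]
  · congr 1
    by_cases hbv : b v = true
    · have h2 : (Finset.univ.filter fun j : Fin n => j < v ∧ b v = true) = Finset.Iio v := by
        ext j; simp [hbv, Finset.mem_Iio]
      rw [h2, Fin.card_Iio]
      rcases Nat.eq_zero_or_pos (v : ℕ) with h0 | h0
      · simp [h0]
      · simp [h0, hbv]
    · simp [hbv]
  · rw [Finset.disjoint_left]
    intro j hj hj'
    simp only [Finset.mem_filter] at hj hj'
    exact absurd (hj.2.1.trans hj'.2.1) (lt_irrefl _)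

/-- For a threshold graph with `c ≥ 1` cone vertices,
`Σ_{i=1}^{c} d^T_i = e(G) + C(c+1,2)`. -/
theorem conjPart_sum_threshold (n : ℕ) (b : Fin n → Bool)
    (hc : 1 ≤ coneCount n b) :
    ∑ i ∈ Finset.Icc 1 (coneCount n b), conjPart (thresholdGraph n b) i =
      edgeCount (thresholdGraph n b) + (coneCount n b + 1).choose 2 := by
  set G := thresholdGraph n b with hG
  set c := coneCount n b with hcdef
  set C : Finset (Fin n) := Finset.univ.filter (fun i : Fin n => 0 < (i : ℕ) ∧ b i = true)
    with hCdef
  have hcard : C.card = c := rfl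
  set A : Fin n → ℕ := fun v => (Finset.univ.filter fun j : Fin n => v < j ∧ b j = true).card
    with hAdef
  -- A v counts cone vertices above v
  have hAC : ∀ v : Fin n, A v = (C.filter fun j => v < j).card := by
    intro v
    simp only [hAdef]
    congr 1
    ext j
    simp only [hCdef, Finset.mem_filter, Finset.mem_univ, true_and, hAdef]
    constructor
    · rintro ⟨h1, h2⟩
      exact ⟨⟨lt_of_le_of_lt (Nat.zero_le _) h1, h2⟩, h1⟩
    · rintro ⟨⟨-, h2⟩, h1⟩
      exact ⟨h1, h2⟩
  have hAle : ∀ v : Fin n, A v ≤ c := by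
    intro v
    rw [hAC v, ← hcard]
    exact Finset.card_le_card (Finset.filter_subset _ _)
  -- degree formula
  have hdeg : ∀ v, vertDegree G v = A v + (if 0 < (v : ℕ) ∧ b v = true then (v : ℕ) else 0) :=
    tg_deg_formula n b
  -- total of A over all vertices
  have sumA : ∑ v : Fin n, A v = ∑ j ∈ C, (j : ℕ) := by
    have h1 : ∀ v : Fin n, A v = ∑ j ∈ C, if v < j then 1 else 0 := by
      intro v; rw [hAC v, Finset.card_filter]
    calc ∑ v : Fin n, A v = ∑ v : Fin n, ∑ j ∈ C, if v < j then 1 else 0 := by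
          exact Finset.sum_congr rfl fun v _ => h1 v
      _ = ∑ j ∈ C, ∑ v : Fin n, if v < j then 1 else 0 := Finset.sum_comm
      _ = ∑ j ∈ C, (j : ℕ) := by
          refine Finset.sum_congr rfl fun j _ => ?_
          rw [← Finset.card_filter]
          have h2 : (Finset.univ.filter fun v : Fin n => v < j) = Finset.Iio j := by
            ext v; simp
          rw [h2, Fin.card_Iio]
  -- edge count
  have hedge : edgeCount G = ∑ j ∈ C, (j : ℕ) := by
    have hhand : ∑ v, vertDegree G v = 2 * edgeCount G := by
      unfold vertDegree edgeCount
      letI := Classical.decRel G.Adj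
      exact SimpleGraph.sum_degrees_eq_twice_card_edges G
    have hsum_ite : ∑ v : Fin n, (if 0 < (v : ℕ) ∧ b v = true then (v : ℕ) else 0)
        = ∑ j ∈ C, (j : ℕ) := (Finset.sum_filter _ _).symm
    have h2 : ∑ v, vertDegree G v = 2 * ∑ j ∈ C, (j : ℕ) := by
      calc ∑ v, vertDegree G v
          = ∑ v : Fin n, (A v + (if 0 < (v : ℕ) ∧ b v = true then (v : ℕ) else 0)) :=
            Finset.sum_congr rfl fun v _ => hdeg v
        _ = (∑ v : Fin n, A v) + ∑ v : Fin n, (if 0 < (v : ℕ) ∧ b v = true then (v : ℕ) else 0) :=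
            Finset.sum_add_distrib
        _ = 2 * ∑ j ∈ C, (j : ℕ) := by rw [sumA, hsum_ite]; ring
    omega
  -- pairs within C
  have hBtwo : 2 * ∑ v ∈ C, A v = c * (c - 1) := by
    have hswap : ∑ v ∈ C, (C.filter fun j => v < j).card
        = ∑ v ∈ C, (C.filter fun j => j < v).card := by
      simp_rw [Finset.card_filter]
      exact Finset.sum_comm
    have hsplit : ∀ v ∈ C, (C.filter fun j => v < j).card + (C.filter fun j => j < v).card
        = c - 1 := by
      intro v hv
      have hdisj : Disjoint (C.filter fun j => v < j) (C.filter fun j => j < v) := by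
        rw [Finset.disjoint_left]
        intro j hj hj'
        simp only [Finset.mem_filter] at hj hj'
        exact absurd (hj.2.trans hj'.2) (lt_irrefl _)
      have hun : (C.filter fun j => v < j) ∪ (C.filter fun j => j < v) = C.erase v := by
        ext j
        simp only [Finset.mem_union, Finset.mem_filter, Finset.mem_erase]
        constructor
        · rintro (⟨hj, h⟩ | ⟨hj, h⟩)
          · exact ⟨(ne_of_lt h).symm, hj⟩
          · exact ⟨ne_of_lt h, hj⟩
        · rintro ⟨hne, hj⟩
          rcases lt_or_gt_of_ne hne with h | h
          · exact Or.inr ⟨hj, h⟩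
          · exact Or.inl ⟨hj, h⟩
      rw [← Finset.card_union_of_disjoint hdisj, hun, Finset.card_erase_of_mem hv, hcard]
    calc 2 * ∑ v ∈ C, A v = ∑ v ∈ C, A v + ∑ v ∈ C, A v := by ring
      _ = ∑ v ∈ C, (C.filter fun j => v < j).card + ∑ v ∈ C, (C.filter fun j => j < v).card := by
          rw [show ∑ v ∈ C, A v = ∑ v ∈ C, (C.filter fun j => v < j).card from
            Finset.sum_congr rfl fun v _ => hAC v]
          rw [hswap]
      _ = ∑ v ∈ C, ((C.filter fun j => v < j).card + (C.filter fun j => j < v).card) :=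
          Finset.sum_add_distrib.symm
      _ = ∑ _v ∈ C, (c - 1) := Finset.sum_congr rfl hsplit
      _ = c * (c - 1) := by rw [Finset.sum_const, hcard, smul_eq_mul]
  -- cone vertices have degree at least c
  have hcle : ∀ v ∈ C, c ≤ vertDegree G v := by
    intro v hv
    simp only [hCdef, Finset.mem_filter, Finset.mem_univ, true_and] at hv
    have hle : (C.filter fun j => ¬ v < j).card ≤ (v : ℕ) := by
      have hinj := Finset.card_le_card_of_injOn (f := fun j : Fin n => (j : ℕ))
        (s := C.filter fun j => ¬ v < j) (t := Finset.Icc 1 (v : ℕ))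
        (fun j hj => by
          simp only [hCdef, Finset.mem_coe, Finset.mem_filter, Finset.mem_univ, true_and, not_lt,
            Finset.mem_Icc] at hj ⊢
          exact ⟨hj.1.1, hj.2⟩)
        (fun a _ a' _ h => Fin.val_injective h)
      simpa [Nat.card_Icc] using hinj
    have hpart : (C.filter fun j => v < j).card + (C.filter fun j => ¬ v < j).card = c := by
      rw [Finset.card_filter_add_card_filter_not, hcard]
    rw [hdeg v, if_pos hv, ← hAC v] at *
    omega
  -- conjugate partition sum equals sum of min
  have hconj : ∑ i ∈ Finset.Icc 1 c, conjPart G i = ∑ v : Fin n, min (vertDegree G v) c := by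
    unfold conjPart
    calc ∑ i ∈ Finset.Icc 1 c, (Finset.univ.filter fun v : Fin n => i ≤ vertDegree G v).card
        = ∑ i ∈ Finset.Icc 1 c, ∑ v : Fin n, if i ≤ vertDegree G v then 1 else 0 :=
          Finset.sum_congr rfl fun i _ => Finset.card_filter _ _
      _ = ∑ v : Fin n, ∑ i ∈ Finset.Icc 1 c, if i ≤ vertDegree G v then 1 else 0 :=
          Finset.sum_comm
      _ = ∑ v : Fin n, min (vertDegree G v) c := by
          refine Finset.sum_congr rfl fun v _ => ?_
          rw [← Finset.card_filter]
          have h2 : (Finset.Icc 1 c).filter (fun i => i ≤ vertDegree G v)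
              = Finset.Icc 1 (min (vertDegree G v) c) := by
            ext i
            simp only [Finset.mem_filter, Finset.mem_Icc]
            omega
          rw [h2, Nat.card_Icc]
          omega
  -- split the min-sum over cone / non-cone vertices
  have hsplit2 : ∑ v : Fin n, min (vertDegree G v) c
      = c * c + ∑ v ∈ Finset.univ.filter (fun v : Fin n => ¬ (0 < (v : ℕ) ∧ b v = true)),
          A v := by
    rw [← Finset.sum_filter_add_sum_filter_not Finset.univ
      (fun v : Fin n => 0 < (v : ℕ) ∧ b v = true) (fun v => min (vertDegree G v) c)]
    congr 1
    · calc ∑ v ∈ C, min (vertDegree G v) c = ∑ _v ∈ C, c :=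
            Finset.sum_congr rfl fun v hv => min_eq_right (hcle v hv)
        _ = c * c := by rw [Finset.sum_const, hcard, smul_eq_mul]
    · refine Finset.sum_congr rfl fun v hv => ?_
      simp only [Finset.mem_filter, Finset.mem_univ, true_and] at hv
      rw [hdeg v, if_neg hv, Nat.add_zero]
      exact min_eq_left (hAle v)
  -- the complement sum
  have hcompl : ∑ v ∈ Finset.univ.filter (fun v : Fin n => ¬ (0 < (v : ℕ) ∧ b v = true)), A v
      + ∑ v ∈ C, A v = ∑ j ∈ C, (j : ℕ) := by
    rw [← sumA]
    rw [add_comm]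
    exact Finset.sum_filter_add_sum_filter_not Finset.univ _ A
  -- choose arithmetic
  have hch : ((c + 1).choose 2) * 2 = (c + 1) * c := by
    rw [Nat.choose_two_right]
    simp only [Nat.add_sub_cancel]
    rw [Nat.div_mul_cancel]
    rw [mul_comm]
    exact (Nat.even_mul_succ_self c).two_dvd
  -- finish
  have hsq : c * (c - 1) + (c + 1) * c = 2 * (c * c) := by
    have : ∀ k : ℕ, (k + 1) * k + (k + 1 + 1) * (k + 1) = 2 * ((k + 1) * (k + 1)) := by
      intro k; ring
    obtain ⟨m, hm⟩ : ∃ m, c = m + 1 := ⟨c - 1, by omega⟩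
    rw [hm]
    simpa using this m
  rw [hconj, hsplit2, hedge]
  set X := ∑ v ∈ Finset.univ.filter (fun v : Fin n => ¬ (0 < (v : ℕ) ∧ b v = true)), A v with hX
  set B := ∑ v ∈ C, A v with hB
  set T := ∑ j ∈ C, (j : ℕ) with hT
  set t := (c + 1).choose 2 with ht
  set P := c * c with hP
  set Q := c * (c - 1) with hQ
  set R := (c + 1) * c with hR
  omega
end

section
/- Let S be a ridge-connected k-family on vertex set {1,…,n} with 2 ≤ k ≤ n such that every element of {1,…,n} belongs to at least one facet of S. Then λ₁(S) ≤ (k−1)·f_{k−1}(S) + 1; that is, S satisfies the 1st generalized Brouwer inequality. -/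
/-- Signed boundary matrix of a `k`-family `S` on vertex set `Fin n`: rows are indexed
by the `(k-1)`-element subsets, columns by the facets; the `(R,F)` entry is `(-1)^j`
if `R ⊆ F` and the unique element of `F \ R` is the `(j+1)`-st smallest element of
`F`, and `0` otherwise. -/
noncomputable def bdry (n k : ℕ) (S : Finset (Finset (Fin n))) :
    Matrix {R : Finset (Fin n) // R.card = k - 1} {F : Finset (Fin n) // F ∈ S} ℝ :=
  fun R F =>
    if R.1 ⊆ F.1 then
      ∑ x ∈ F.1 \ R.1, (-1 : ℝ) ^ (F.1.filter (fun y => y < x)).card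
    else 0

/-- The Laplacian `∂ ∂ᵀ` of a `k`-family. -/
noncomputable def simpLap (n k : ℕ) (S : Finset (Finset (Fin n))) :
    Matrix {R : Finset (Fin n) // R.card = k - 1} {R : Finset (Fin n) // R.card = k - 1} ℝ :=
  bdry n k S * (bdry n k S).conjTranspose

lemma simpLap_isHermitian (n k : ℕ) (S : Finset (Finset (Fin n))) :
    (simpLap n k S).IsHermitian :=
  Matrix.isHermitian_mul_conjTranspose_self _

/-- The `t`-th generalized Brouwer inequality for a `k`-family `S`:
`λ₁(S) + ⋯ + λ_t(S) ≤ (k-1)·f_{k-1}(S) + C(t+k-1, k)`. -/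
noncomputable def GenBrouwerIneq (n k : ℕ) (S : Finset (Finset (Fin n))) (t : ℕ) : Prop :=
  topEigSum (simpLap_isHermitian n k S) t ≤
    ((k : ℝ) - 1) * S.card + ((t + k - 1).choose k : ℝ)

/-- The ridge graph of a `k`-family: vertices are the facets, two facets being
adjacent exactly when their intersection has `k-1` elements. -/
def ridgeGraph (n k : ℕ) (S : Finset (Finset (Fin n))) :
    SimpleGraph {F : Finset (Fin n) // F ∈ S} where
  Adj F G := F ≠ G ∧ (F.1 ∩ G.1).card = k - 1
  symm := ⟨fun F G h => ⟨h.1.symm, by rw [Finset.inter_comm]; exact h.2⟩⟩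
  loopless := ⟨fun F h => h.1 rfl⟩

section Aux

open Finset

lemma aux_take_one_sum_le {l : List ℝ} {C : ℝ} (hC : 0 ≤ C) (h : ∀ x ∈ l, x ≤ C) :
    (l.take 1).sum ≤ C := by
  cases l with
  | nil => simpa using hC
  | cons a t => simpa using h a List.mem_cons_self

variable {n k : ℕ} {S : Finset (Finset (Fin n))}

lemma abs_bdry_le_one (hk : 1 ≤ k) (hcard : ∀ F ∈ S, F.card = k)
    (R : {R : Finset (Fin n) // R.card = k - 1}) (F : {F : Finset (Fin n) // F ∈ S}) :
    |bdry n k S R F| ≤ 1 := by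
  unfold bdry
  by_cases h : R.1 ⊆ F.1
  · rw [if_pos h]
    have hc : (F.1 \ R.1).card = 1 := by
      rw [Finset.card_sdiff_of_subset h, hcard F.1 F.2, R.2]
      omega
    obtain ⟨a, ha⟩ := Finset.card_eq_one.mp hc
    rw [ha, Finset.sum_singleton, abs_pow, abs_neg, abs_one, one_pow]
  · rw [if_neg h]; norm_num

lemma bdry_eq_zero {R : {R : Finset (Fin n) // R.card = k - 1}}
    {F : {F : Finset (Fin n) // F ∈ S}} (h : ¬ R.1 ⊆ F.1) : bdry n k S R F = 0 :=
  if_neg h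

lemma diag_bound (hk : 1 ≤ k) (hcard : ∀ F ∈ S, F.card = k)
    (F : {F : Finset (Fin n) // F ∈ S}) :
    ((bdry n k S).conjTranspose * bdry n k S) F F ≤ (k : ℝ) := by
  rw [Matrix.mul_apply]
  simp only [Matrix.conjTranspose_apply, RCLike.star_def, starRingEnd_apply, star_trivial]
  have h1 : ∀ R : {R : Finset (Fin n) // R.card = k - 1},
      bdry n k S R F * bdry n k S R F ≤ if R.1 ⊆ F.1 then (1:ℝ) else 0 := by
    intro R
    by_cases h : R.1 ⊆ F.1
    · rw [if_pos h]
      have := abs_bdry_le_one hk hcard R F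
      nlinarith [abs_nonneg (bdry n k S R F), sq_abs (bdry n k S R F)]
    · rw [if_neg h, bdry_eq_zero h, mul_zero]
  calc ∑ R, bdry n k S R F * bdry n k S R F
      ≤ ∑ R : {R : Finset (Fin n) // R.card = k - 1},
          (if R.1 ⊆ F.1 then (1:ℝ) else 0) := Finset.sum_le_sum fun R _ => h1 R
    _ = ((Finset.univ.filter (fun R : {R : Finset (Fin n) // R.card = k - 1} =>
          R.1 ⊆ F.1)).card : ℝ) := by rw [Finset.sum_boole]
    _ ≤ (k : ℝ) := by
        have hle : (Finset.univ.filter (fun R : {R : Finset (Fin n) // R.card = k - 1} =>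
            R.1 ⊆ F.1)).card ≤ (F.1.powersetCard (k-1)).card := by
          apply Finset.card_le_card_of_injOn Subtype.val
          · intro R hR
            rw [Finset.mem_coe, Finset.mem_filter] at hR
            exact Finset.mem_powersetCard.mpr ⟨hR.2, R.2⟩
          · intro a _ b _ hab
            exact Subtype.ext hab
        have hcp : (F.1.powersetCard (k-1)).card = k := by
          rw [Finset.card_powersetCard, hcard F.1 F.2]
          have h2 : k - (k - 1) = 1 := by omega
          rw [← Nat.choose_symm (Nat.sub_le k 1), h2, Nat.choose_one_right]
        rw [hcp] at hle
        exact_mod_cast hle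

lemma offdiag_bound (hk : 1 ≤ k) (hcard : ∀ F ∈ S, F.card = k)
    {F G : {F : Finset (Fin n) // F ∈ S}} (hFG : F ≠ G) :
    ‖((bdry n k S).conjTranspose * bdry n k S) F G‖ ≤ 1 := by
  rw [Matrix.mul_apply, Real.norm_eq_abs]
  simp only [Matrix.conjTranspose_apply, star_trivial]
  have hcFG : (F.1 ∩ G.1).card ≤ k - 1 := by
    have h1 : (F.1 ∩ G.1).card ≤ k := by
      calc (F.1 ∩ G.1).card ≤ F.1.card := Finset.card_le_card (Finset.inter_subset_left)
        _ = k := hcard F.1 F.2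
    rcases Nat.lt_or_ge (F.1 ∩ G.1).card k with h | h
    · omega
    · exfalso
      have heq : F.1 ∩ G.1 = F.1 := by
        apply Finset.eq_of_subset_of_card_le Finset.inter_subset_left
        rw [hcard F.1 F.2]; exact h
      have hsub : F.1 ⊆ G.1 := heq ▸ Finset.inter_subset_right
      have : F.1 = G.1 := Finset.eq_of_subset_of_card_le hsub
        (by rw [hcard F.1 F.2, hcard G.1 G.2])
      exact hFG (Subtype.ext this)
  have h1 : ∀ R : {R : Finset (Fin n) // R.card = k - 1},
      |bdry n k S R F * bdry n k S R G| ≤ if R.1 = F.1 ∩ G.1 then (1:ℝ) else 0 := by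
    intro R
    by_cases h : R.1 = F.1 ∩ G.1
    · rw [if_pos h, abs_mul]
      exact mul_le_one₀ (abs_bdry_le_one hk hcard R F) (abs_nonneg _)
        (abs_bdry_le_one hk hcard R G)
    · rw [if_neg h]
      by_cases hF : R.1 ⊆ F.1
      · by_cases hG : R.1 ⊆ G.1
        · exfalso
          apply h
          apply Finset.eq_of_subset_of_card_le (Finset.subset_inter hF hG)
          rw [R.2]; exact hcFG
        · rw [bdry_eq_zero hG, mul_zero, abs_zero]
      · rw [bdry_eq_zero hF, zero_mul, abs_zero]
  calc |∑ R, bdry n k S R F * bdry n k S R G|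
      ≤ ∑ R, |bdry n k S R F * bdry n k S R G| := Finset.abs_sum_le_sum_abs _ _
    _ ≤ ∑ R : {R : Finset (Fin n) // R.card = k - 1},
          (if R.1 = F.1 ∩ G.1 then (1:ℝ) else 0) := Finset.sum_le_sum fun R _ => h1 R
    _ = ((Finset.univ.filter (fun R : {R : Finset (Fin n) // R.card = k - 1} =>
          R.1 = F.1 ∩ G.1)).card : ℝ) := by rw [Finset.sum_boole]
    _ ≤ 1 := by
        have : (Finset.univ.filter (fun R : {R : Finset (Fin n) // R.card = k - 1} =>
            R.1 = F.1 ∩ G.1)).card ≤ 1 := by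
          apply Finset.card_le_one.mpr
          intro a ha b hb
          rw [Finset.mem_filter] at ha hb
          exact Subtype.ext (ha.2.trans hb.2.symm)
        exact_mod_cast this

end Aux

section Main
open Matrix

variable {n k : ℕ} {S : Finset (Finset (Fin n))}

lemma eig_bound (hk : 2 ≤ k) (hne : S.Nonempty)
    (hcard : ∀ F ∈ S, F.card = k) (i : {R : Finset (Fin n) // R.card = k - 1}) :
    (simpLap_isHermitian n k S).eigenvalues i ≤ ((k:ℝ) - 1) * S.card + 1 := by
  have hk2 : (2:ℝ) ≤ (k:ℝ) := by exact_mod_cast hk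
  have hc1 : (1:ℝ) ≤ (S.card : ℝ) := by exact_mod_cast hne.card_pos
  set μ := (simpLap_isHermitian n k S).eigenvalues i with hμdef
  by_cases hμ : μ ≤ 0
  · nlinarith
  push_neg at hμ
  set B := bdry n k S with hBdef
  set v := ⇑((simpLap_isHermitian n k S).eigenvectorBasis i) with hvdef
  have hv : (B * B.conjTranspose) *ᵥ v = μ • v :=
    (simpLap_isHermitian n k S).mulVec_eigenvectorBasis i
  have hvne : v ≠ 0 := by
    intro h0
    exact ((simpLap_isHermitian n k S).eigenvectorBasis.orthonormal.ne_zero i)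
      (by ext j; exact congrFun h0 j)
  set w := B.conjTranspose *ᵥ v with hwdef
  have hw : (B.conjTranspose * B) *ᵥ w = μ • w := by
    calc (B.conjTranspose * B) *ᵥ (B.conjTranspose *ᵥ v)
        = B.conjTranspose *ᵥ ((B * B.conjTranspose) *ᵥ v) := by
          rw [Matrix.mulVec_mulVec, Matrix.mulVec_mulVec, Matrix.mul_assoc]
      _ = μ • (B.conjTranspose *ᵥ v) := by rw [hv, Matrix.mulVec_smul]
  have hwne : w ≠ 0 := by
    intro h0
    have h1 : B *ᵥ w = 0 := by rw [h0, Matrix.mulVec_zero]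
    rw [hwdef, Matrix.mulVec_mulVec, hv] at h1
    rcases smul_eq_zero.mp h1 with h | h
    · exact absurd h (ne_of_gt hμ)
    · exact hvne h
  have heig : Module.End.HasEigenvalue (Matrix.toLin' (B.conjTranspose * B)) μ :=
    Module.End.hasEigenvalue_of_hasEigenvector
      ⟨Module.End.mem_eigenspace_iff.mpr (by simpa [Matrix.toLin'_apply] using hw), hwne⟩
  obtain ⟨F, hF⟩ := eigenvalue_mem_ball heig
  rw [Metric.mem_closedBall, Real.dist_eq] at hF
  have hdiag : (B.conjTranspose * B) F F ≤ (k : ℝ) := diag_bound (by omega) hcard F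
  have hrad : ∑ G ∈ Finset.univ.erase F, ‖(B.conjTranspose * B) F G‖ ≤ (S.card : ℝ) - 1 := by
    have h1 : ∑ G ∈ Finset.univ.erase F, ‖(B.conjTranspose * B) F G‖
        ≤ ∑ _G ∈ Finset.univ.erase F, (1:ℝ) := by
      apply Finset.sum_le_sum
      intro G hG
      exact offdiag_bound (by omega) hcard (Finset.ne_of_mem_erase hG).symm
    rw [Finset.sum_const, nsmul_eq_mul, mul_one] at h1
    have h2 : (Finset.univ.erase F).card = Fintype.card {F : Finset (Fin n) // F ∈ S} - 1 := by
      rw [Finset.card_erase_of_mem (Finset.mem_univ F), Finset.card_univ]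
    have h3 : Fintype.card {F : Finset (Fin n) // F ∈ S} = S.card :=
      Fintype.card_of_subtype S fun _ => Iff.rfl
    rw [h2, h3] at h1
    have h4 : ((S.card - 1 : ℕ) : ℝ) = (S.card : ℝ) - 1 := by
      have : 1 ≤ S.card := hne.card_pos
      push_cast [Nat.cast_sub this]
      ring
    rw [h4] at h1
    exact h1
  have habs : μ - (B.conjTranspose * B) F F ≤ |μ - (B.conjTranspose * B) F F| := le_abs_self _
  nlinarith

end Main


/-- A ridge-connected `k`-family covering the whole vertex set satisfies the
first generalized Brouwer inequality: `λ₁(S) ≤ (k-1)·f_{k-1}(S) + 1`. -/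
theorem genBrouwer_one (n k : ℕ) (hk : 2 ≤ k) (hkn : k ≤ n)
    (S : Finset (Finset (Fin n))) (hne : S.Nonempty)
    (hcard : ∀ F ∈ S, F.card = k)
    (hconn : (ridgeGraph n k S).Connected)
    (hcover : ∀ v : Fin n, ∃ F ∈ S, v ∈ F) :
    topEigSum (simpLap_isHermitian n k S) 1 ≤ ((k : ℝ) - 1) * S.card + 1 := by
  have hk2 : (2:ℝ) ≤ (k:ℝ) := by exact_mod_cast hk
  have hc1 : (1:ℝ) ≤ (S.card : ℝ) := by exact_mod_cast hne.card_pos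
  unfold topEigSum
  apply aux_take_one_sum_le (by nlinarith)
  intro x hx
  rw [Multiset.mem_sort] at hx
  obtain ⟨i, _, rfl⟩ := Multiset.mem_map.mp hx
  exact eig_bound hk hne hcard i
end

section
/- Fix k ≥ 2 and an integer t with 1 < t ≤ C(n,k−1). Let S be a k-family on vertex set {1,…,n} that violates the t-th generalized Brouwer inequality, and suppose that every proper subfamily of S satisfies the t-th generalized Brouwer inequality. Then every subfamily H of S (including S itself) satisfies λ₁(H) + ⋯ + λ_t(H) > (k−1)·f_{k−1}(H). -/
section KyFan

open Matrix Finset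

variable {m : Type} [Fintype m] [DecidableEq m]

lemma exists_antitone_equiv (μ : m → ℝ) :
    ∃ g : Fin (Fintype.card m) ≃ m,
      ∀ i j : Fin (Fintype.card m), i ≤ j → μ (g j) ≤ μ (g i) := by
  set e := (Fintype.equivFin m).symm with he
  set f : Fin (Fintype.card m) → ℝ := fun i => - μ (e i) with hf
  refine ⟨(Tuple.sort f).trans e, fun i j hij => ?_⟩
  have h := Tuple.monotone_sort f hij
  simp only [Function.comp_apply, hf] at h
  simpa [Equiv.trans_apply] using neg_le_neg_iff.mp h

lemma topEigSum_congr {A B : Matrix m m ℝ} (h : A = B)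
    (hA : A.IsHermitian) (hB : B.IsHermitian) (t : ℕ) :
    topEigSum hA t = topEigSum hB t := by subst h; rfl

lemma topEigSum_eq_sum {A : Matrix m m ℝ} (hA : A.IsHermitian) (t : ℕ)
    (ht : t ≤ Fintype.card m) (g : Fin (Fintype.card m) ≃ m)
    (hg : ∀ i j, i ≤ j → hA.eigenvalues (g j) ≤ hA.eigenvalues (g i)) :
    topEigSum hA t = ∑ i : Fin t, hA.eigenvalues (g (Fin.castLE ht i)) := by
  classical
  set μ := hA.eigenvalues with hμ
  set L : List ℝ := List.ofFn (fun i : Fin (Fintype.card m) => μ (g i)) with hL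
  have hperm : List.Perm ((Finset.univ.val.map μ).sort (· ≥ ·)) L := by
    apply Multiset.coe_eq_coe.mp
    rw [Multiset.sort_eq]
    have h1 : (Finset.univ : Finset m).val =
        Multiset.map g (Finset.univ : Finset (Fin (Fintype.card m))).val := by
      have := Finset.map_univ_equiv g
      rw [← this, Finset.map_val]
      rfl
    rw [h1, Multiset.map_map]
    have h2 := Fin.univ_val_map (fun i : Fin (Fintype.card m) => μ (g i))
    rw [hL]
    simpa [Function.comp] using h2
  have hsortedL : L.Pairwise (· ≥ ·) := by
    rw [hL, List.pairwise_ofFn]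
    intro i j hij
    exact hg i j (le_of_lt hij)
  have heq : ((Finset.univ.val.map μ).sort (· ≥ ·)) = L :=
    List.Perm.eq_of_pairwise' (Multiset.pairwise_sort _ _) hsortedL hperm
  rw [topEigSum, ← hμ, heq, hL, ← Fin.ofFn_take_eq_take_ofFn ht, List.sum_ofFn]
  rfl

lemma weighted_sum_le {N t : ℕ} (ht1 : 1 ≤ t) (ht : t ≤ N) (ν : Fin N → ℝ)
    (hν : ∀ i j : Fin N, i ≤ j → ν j ≤ ν i) (c : Fin N → ℝ)
    (hc0 : ∀ i, 0 ≤ c i) (hc1 : ∀ i, c i ≤ 1) (hcs : ∑ i, c i = t) :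
    ∑ i, ν i * c i ≤ ∑ i : Fin t, ν (Fin.castLE ht i) := by
  classical
  set A : Finset (Fin N) :=
    Finset.univ.map ⟨Fin.castLE ht, (Fin.strictMono_castLE ht).injective⟩ with hA
  have hmemA : ∀ i : Fin N, i ∈ A ↔ (i : ℕ) < t := by
    intro i
    simp only [hA, Finset.mem_map, Finset.mem_univ, true_and, Function.Embedding.coeFn_mk]
    constructor
    · rintro ⟨j, rfl⟩; exact j.2
    · intro h; exact ⟨⟨i, h⟩, rfl⟩
  have hcardA : A.card = t := by simp [hA]
  set θ : ℝ := ν ⟨t - 1, by omega⟩ with hθ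
  have hθle : ∀ i ∈ A, θ ≤ ν i := by
    intro i hi
    apply hν
    have hit := (hmemA i).mp hi
    rw [Fin.le_def]
    show (i : ℕ) ≤ t - 1
    omega
  have hleθ : ∀ i ∈ Finset.univ \ A, ν i ≤ θ := by
    intro i hi
    apply hν
    have hit : ¬ (i : ℕ) < t := fun h => by
      simp [Finset.mem_sdiff, (hmemA i).mpr h] at hi
    rw [Fin.le_def]
    show t - 1 ≤ (i : ℕ)
    omega
  have hAsub : A ⊆ Finset.univ := Finset.subset_univ A
  have hsplit : ∑ i ∈ Finset.univ \ A, (fun i => ν i * c i) i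
      + ∑ i ∈ A, ν i * c i = ∑ i, ν i * c i := Finset.sum_sdiff hAsub
  have hsplitc : ∑ i ∈ Finset.univ \ A, c i + ∑ i ∈ A, c i = (t : ℝ) := by
    rw [Finset.sum_sdiff hAsub]; exact hcs
  have h1 : ∑ i ∈ Finset.univ \ A, ν i * c i ≤ θ * ∑ i ∈ Finset.univ \ A, c i := by
    rw [Finset.mul_sum]
    exact Finset.sum_le_sum fun i hi =>
      mul_le_mul_of_nonneg_right (hleθ i hi) (hc0 i)
  have h2 : θ * ∑ i ∈ Finset.univ \ A, c i = ∑ i ∈ A, θ * (1 - c i) := by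
    rw [← Finset.mul_sum]
    congr 1
    rw [Finset.sum_sub_distrib, Finset.sum_const, hcardA, nsmul_eq_mul, mul_one]
    linarith
  have h3 : ∑ i ∈ A, (ν i * c i + θ * (1 - c i)) ≤ ∑ i ∈ A, ν i := by
    apply Finset.sum_le_sum
    intro i hi
    have h4 := hθle i hi
    have h5 := hc1 i
    nlinarith
  have h6 : ∑ i ∈ A, ν i = ∑ i : Fin t, ν (Fin.castLE ht i) := by
    rw [hA, Finset.sum_map]
    rfl
  rw [← h6]
  have := Finset.sum_add_distrib (s := A) (f := fun i => ν i * c i)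
    (g := fun i => θ * (1 - c i))
  linarith

lemma trace_conj_le {A : Matrix m m ℝ} (hA : A.IsHermitian) {t : ℕ}
    (ht1 : 1 ≤ t) (ht : t ≤ Fintype.card m)
    (V : Matrix m (Fin t) ℝ) (hV : Vᴴ * V = 1) :
    (Vᴴ * A * V).trace ≤ topEigSum hA t := by
  classical
  set μ := hA.eigenvalues with hμ
  set U : Matrix m m ℝ := ↑hA.eigenvectorUnitary with hU
  have hU1 : Uᴴ * U = 1 := by
    rw [← Matrix.star_eq_conjTranspose]
    exact Matrix.mem_unitaryGroup_iff'.mp hA.eigenvectorUnitary.2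
  have hU2 : U * Uᴴ = 1 := by
    rw [← Matrix.star_eq_conjTranspose]
    exact Matrix.mem_unitaryGroup_iff.mp hA.eigenvectorUnitary.2
  have hdiag : A = U * Matrix.diagonal μ * Uᴴ := by
    have h := hA.spectral_theorem
    simp only [Unitary.conjStarAlgAut_apply, Unitary.coe_star, Matrix.star_eq_conjTranspose] at h
    simpa [RCLike.ofReal_real_eq_id, hU, hμ] using h
  set W : Matrix m (Fin t) ℝ := Uᴴ * V with hW
  have hWct : Wᴴ = Vᴴ * U := by
    rw [hW, Matrix.conjTranspose_mul, Matrix.conjTranspose_conjTranspose]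
  have hWW : Wᴴ * W = 1 := by
    rw [hWct, hW]
    calc Vᴴ * U * (Uᴴ * V) = Vᴴ * (U * Uᴴ * V) := by
          rw [Matrix.mul_assoc, Matrix.mul_assoc]
    _ = 1 := by rw [hU2, Matrix.one_mul, hV]
  set P : Matrix m m ℝ := W * Wᴴ with hP
  have hPsym : P.IsHermitian := Matrix.isHermitian_mul_conjTranspose_self W
  have hPP : P * P = P := by
    rw [hP]
    calc W * Wᴴ * (W * Wᴴ) = W * (Wᴴ * W * Wᴴ) := by
          rw [Matrix.mul_assoc W Wᴴ (W * Wᴴ), ← Matrix.mul_assoc Wᴴ W Wᴴ]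
    _ = W * Wᴴ := by rw [hWW, Matrix.one_mul]
  have hP0 : ∀ j, 0 ≤ P j j := by
    intro j
    rw [hP, Matrix.mul_apply]
    apply Finset.sum_nonneg
    intro i _
    rw [Matrix.conjTranspose_apply, star_trivial]
    exact mul_self_nonneg _
  have hP1 : ∀ j, P j j ≤ 1 := by
    intro j
    have h1 : P j j = ∑ i, P j i * P i j := by
      conv_lhs => rw [← hPP]
      rw [Matrix.mul_apply]
    have h2 : (P j j) ^ 2 ≤ ∑ i, P j i * P i j := by
      have : ∀ i, 0 ≤ P j i * P i j := by
        intro i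
        have : P i j = P j i := by
          conv_lhs => rw [← hPsym]
          rw [Matrix.conjTranspose_apply, star_trivial]
        rw [this]
        exact mul_self_nonneg _
      calc (P j j)^2 = P j j * P j j := pow_two _
      _ ≤ ∑ i, P j i * P i j :=
        Finset.single_le_sum (fun i _ => this i) (Finset.mem_univ j)
    nlinarith [hP0 j]
  have hPtr : ∑ j, P j j = (t : ℝ) := by
    have h1 : ∑ j, P j j = P.trace := by simp [Matrix.trace, Matrix.diag]
    rw [h1, hP, Matrix.trace_mul_comm, hWW, Matrix.trace_one]
    simp
  have htrace : (Vᴴ * A * V).trace = ∑ j, μ j * P j j := by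
    have h1 : Vᴴ * A * V = Wᴴ * Matrix.diagonal μ * W := by
      rw [hdiag, hWct, hW]; simp only [Matrix.mul_assoc]
    rw [h1, Matrix.trace_mul_cycle, ← hP]
    simp only [Matrix.trace, Matrix.diag, Matrix.mul_diagonal]
    exact Finset.sum_congr rfl fun j _ => mul_comm _ _
  obtain ⟨g, hg⟩ := exists_antitone_equiv μ
  rw [topEigSum_eq_sum hA t ht g hg, htrace]
  have hre : ∑ j, μ j * P j j = ∑ i : Fin (Fintype.card m), μ (g i) * P (g i) (g i) :=
    (Equiv.sum_comp g (fun j => μ j * P j j)).symm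
  rw [hre]
  exact weighted_sum_le ht1 ht (fun i => μ (g i)) (fun i j hij => hg i j hij)
    (fun i => P (g i) (g i)) (fun i => hP0 _) (fun i => hP1 _)
    (by rw [Equiv.sum_comp g (fun j => P j j)]; exact hPtr)

lemma exists_trace_eq {A : Matrix m m ℝ} (hA : A.IsHermitian) {t : ℕ}
    (ht : t ≤ Fintype.card m) :
    ∃ V : Matrix m (Fin t) ℝ, Vᴴ * V = 1 ∧ (Vᴴ * A * V).trace = topEigSum hA t := by
  classical
  obtain ⟨g, hg⟩ := exists_antitone_equiv hA.eigenvalues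
  set U : Matrix m m ℝ := ↑hA.eigenvectorUnitary with hU
  have hU1 : Uᴴ * U = 1 := by
    rw [← Matrix.star_eq_conjTranspose]
    exact Matrix.mem_unitaryGroup_iff'.mp hA.eigenvectorUnitary.2
  have hdiag : Uᴴ * A * U = Matrix.diagonal hA.eigenvalues := by
    have h := hA.conjStarAlgAut_star_eigenvectorUnitary
    simp only [Unitary.conjStarAlgAut_star_apply, Unitary.coe_star, Matrix.star_eq_conjTranspose] at h
    simpa [RCLike.ofReal_real_eq_id, hU] using h
  set h : Fin t → m := fun i => g (Fin.castLE ht i) with hh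
  have hinj : Function.Injective h := fun i j hij => by
    have := g.injective hij
    exact (Fin.strictMono_castLE ht).injective this
  refine ⟨U.submatrix id h, ?_, ?_⟩
  · rw [Matrix.conjTranspose_submatrix,
      ← Matrix.submatrix_mul Uᴴ U h id h Function.bijective_id, hU1,
      Matrix.submatrix_one h hinj]
  · rw [Matrix.conjTranspose_submatrix]
    have key : Uᴴ.submatrix h id * A * U.submatrix id h =
        (Uᴴ * A * U).submatrix h h := by
      conv_lhs => rw [← Matrix.submatrix_id_id A]
      rw [← Matrix.submatrix_mul Uᴴ A h id id Function.bijective_id,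
        ← Matrix.submatrix_mul (Uᴴ * A) U h id h Function.bijective_id]
    rw [key, hdiag, Matrix.submatrix_diagonal _ _ hinj]
    rw [topEigSum_eq_sum hA t ht g hg]
    simp [Matrix.trace, Matrix.diag, hh]

lemma kyFan {A B : Matrix m m ℝ} (hA : A.IsHermitian) (hB : B.IsHermitian) {t : ℕ}
    (ht1 : 1 ≤ t) (ht : t ≤ Fintype.card m) :
    topEigSum (hA.add hB) t ≤ topEigSum hA t + topEigSum hB t := by
  obtain ⟨V, hV1, hV2⟩ := exists_trace_eq (hA.add hB) ht
  rw [← hV2]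
  have h : Vᴴ * (A + B) * V = Vᴴ * A * V + Vᴴ * B * V := by
    rw [Matrix.mul_add, Matrix.add_mul]
  rw [h, Matrix.trace_add]
  exact add_le_add (trace_conj_le hA ht1 ht V hV1) (trace_conj_le hB ht1 ht V hV1)

end KyFan

lemma simpLap_apply (n k : ℕ) (S : Finset (Finset (Fin n)))
    (R R' : {R : Finset (Fin n) // R.card = k - 1}) :
    simpLap n k S R R' = ∑ F ∈ S,
      (if R.1 ⊆ F then ∑ x ∈ F \ R.1, (-1 : ℝ) ^ (F.filter (fun y => y < x)).card else 0) *
      (if R'.1 ⊆ F then ∑ x ∈ F \ R'.1, (-1 : ℝ) ^ (F.filter (fun y => y < x)).card else 0) := by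
  rw [simpLap, Matrix.mul_apply]
  rw [← Finset.sum_coe_sort S (fun F =>
    (if R.1 ⊆ F then ∑ x ∈ F \ R.1, (-1 : ℝ) ^ (F.filter (fun y => y < x)).card else 0) *
    (if R'.1 ⊆ F then ∑ x ∈ F \ R'.1, (-1 : ℝ) ^ (F.filter (fun y => y < x)).card else 0))]
  apply Finset.sum_congr rfl
  intro F _
  simp only [Matrix.conjTranspose_apply, star_trivial, bdry]

lemma simpLap_split (n k : ℕ) (S H : Finset (Finset (Fin n))) (hH : H ⊆ S) :
    simpLap n k S = simpLap n k H + simpLap n k (S \ H) := by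
  ext R R'
  rw [Matrix.add_apply, simpLap_apply, simpLap_apply, simpLap_apply,
    ← Finset.sum_union Finset.disjoint_sdiff, Finset.union_sdiff_of_subset hH]

/-- If `S` is a `k`-family violating the `t`-th generalized Brouwer inequality
(`1 < t`) all of whose proper subfamilies satisfy it, then every subfamily `H` of
`S` satisfies `λ₁(H) + ⋯ + λ_t(H) > (k-1)·f_{k-1}(H)`. -/
theorem forbidden_subfamilies (n k t : ℕ) (hk : 2 ≤ k)
    (ht1 : 1 < t) (ht2 : t ≤ n.choose (k - 1))
    (S : Finset (Finset (Fin n))) (hne : S.Nonempty)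
    (hcard : ∀ F ∈ S, F.card = k)
    (hviol : ¬ GenBrouwerIneq n k S t)
    (hmin : ∀ H ⊆ S, H.Nonempty → H ≠ S → GenBrouwerIneq n k H t) :
    ∀ H ⊆ S, H.Nonempty →
      ((k : ℝ) - 1) * H.card < topEigSum (simpLap_isHermitian n k H) t := by
  intro H hH hHne
  have hN : t ≤ Fintype.card {R : Finset (Fin n) // R.card = k - 1} := by
    rw [Fintype.card_finset_len, Fintype.card_fin]
    exact ht2
  have ht1' : 1 ≤ t := le_of_lt ht1
  have hC : (0 : ℝ) ≤ ((t + k - 1).choose k : ℝ) := Nat.cast_nonneg _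
  unfold GenBrouwerIneq at hviol
  push_neg at hviol
  by_cases hHS : H = S
  · subst hHS
    linarith
  · have hSd : (S \ H).Nonempty := by
      obtain ⟨x, hx1, hx2⟩ := Finset.exists_of_ssubset (lt_of_le_of_ne hH hHS)
      exact ⟨x, Finset.mem_sdiff.mpr ⟨hx1, hx2⟩⟩
    have hSdS : S \ H ≠ S := by
      intro h
      obtain ⟨F, hF⟩ := hHne
      have hFS : F ∈ S := hH hF
      rw [← h] at hFS
      exact (Finset.mem_sdiff.mp hFS).2 hF
    have hGB := hmin (S \ H) Finset.sdiff_subset hSd hSdS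
    unfold GenBrouwerIneq at hGB
    have hkf := kyFan (simpLap_isHermitian n k H) (simpLap_isHermitian n k (S \ H)) ht1' hN
    have heq : topEigSum (simpLap_isHermitian n k S) t =
        topEigSum ((simpLap_isHermitian n k H).add (simpLap_isHermitian n k (S \ H))) t :=
      topEigSum_congr (simpLap_split n k S H hH) _ _ _
    have hcards : ((S \ H).card : ℝ) + (H.card : ℝ) = (S.card : ℝ) := by
      have := Finset.card_sdiff_add_card_eq_card hH
      exact_mod_cast congrArg (Nat.cast : ℕ → ℝ) this
    have hmul : ((k : ℝ) - 1) * (S.card : ℝ) =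
        ((k : ℝ) - 1) * ((S \ H).card : ℝ) + ((k : ℝ) - 1) * (H.card : ℝ) := by
      rw [← hcards]; ring
    linarith
end

section
/- Let S be a k-family on vertex set {1,…,n} and let t be an integer with 1 ≤ t < k. If the matching number of S is greater than t (i.e., S has t+1 facets that pairwise intersect in fewer than k−1 elements), then S satisfies the t-th generalized Brouwer inequality: λ₁(S) + … + λ_t(S) ≤ (k−1)·f_{k−1}(S) + C(t+k−1, k). -/
open Finset Matrix

lemma count_ind {n k : ℕ} (X : Finset (Fin n)) :
    ∑ R : {R : Finset (Fin n) // R.card = k - 1}, (if R.1 ⊆ X then (1:ℝ) else 0)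
      = (X.card.choose (k-1) : ℝ) := by
  rw [← Finset.sum_subtype (Finset.univ.filter (fun R : Finset (Fin n) => R.card = k-1))
      (by simp) (fun R => if R ⊆ X then (1:ℝ) else 0)]
  rw [Finset.sum_boole, Finset.filter_filter]
  have h : Finset.univ.filter (fun R : Finset (Fin n) => R.card = k-1 ∧ R ⊆ X)
      = X.powersetCard (k-1) := by
    ext R; simp [Finset.mem_powersetCard, and_comm]
  rw [h, Finset.card_powersetCard]

lemma abs_bdry_le {n k : ℕ} {S : Finset (Finset (Fin n))} (hk : 1 ≤ k)
    (hcard : ∀ F ∈ S, F.card = k) (R : {R : Finset (Fin n) // R.card = k - 1})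
    (F : {F : Finset (Fin n) // F ∈ S}) :
    |bdry n k S R F| ≤ if R.1 ⊆ F.1 then 1 else 0 := by
  unfold bdry
  by_cases h : R.1 ⊆ F.1
  · simp only [h, if_true]
    have hc : (F.1 \ R.1).card = 1 := by
      rw [card_sdiff_of_subset h, R.2, hcard F.1 F.2, Nat.sub_sub_self hk]
    obtain ⟨x, hx⟩ := card_eq_one.mp hc
    rw [hx, Finset.sum_singleton, abs_pow, abs_neg, abs_one, one_pow]
  · simp [h]

lemma abs_K_le {n k : ℕ} {S : Finset (Finset (Fin n))} (hk : 1 ≤ k)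
    (hcard : ∀ F ∈ S, F.card = k) (F G : {F : Finset (Fin n) // F ∈ S}) :
    |((bdry n k S).conjTranspose * bdry n k S) F G|
      ≤ ((F.1 ∩ G.1).card.choose (k-1) : ℝ) := by
  rw [Matrix.mul_apply]
  refine (Finset.abs_sum_le_sum_abs _ _).trans ?_
  rw [← count_ind (F.1 ∩ G.1)]
  apply Finset.sum_le_sum
  intro R _
  simp only [Matrix.conjTranspose_apply, RCLike.star_def, conj_trivial, abs_mul]
  have hz : ∀ (H : {F : Finset (Fin n) // F ∈ S}), ¬R.1 ⊆ H.1 → bdry n k S R H = 0 := by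
    intro H hH; simp [bdry, hH]
  by_cases hF : R.1 ⊆ F.1 <;> by_cases hG : R.1 ⊆ G.1
  · rw [if_pos (Finset.subset_inter hF hG)]
    exact mul_le_one₀ ((abs_bdry_le hk hcard R F).trans (by rw [if_pos hF])) (abs_nonneg _)
      ((abs_bdry_le hk hcard R G).trans (by rw [if_pos hG]))
  · rw [hz G hG, abs_zero, mul_zero]; positivity
  · rw [hz F hF, abs_zero, zero_mul]; positivity
  · rw [hz F hF, abs_zero, zero_mul]; positivity

lemma eig_le {n k : ℕ} {S : Finset (Finset (Fin n))} (hk : 2 ≤ k) (hne : S.Nonempty)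
    (hcard : ∀ F ∈ S, F.card = k) (i : {R : Finset (Fin n) // R.card = k - 1}) :
    (simpLap_isHermitian n k S).eigenvalues i ≤ (k : ℝ) + S.card - 1 := by
  set hL := simpLap_isHermitian n k S with hLdef
  set μ := hL.eigenvalues i with hμdef
  have hcard1 : (1:ℝ) ≤ S.card := by
    exact_mod_cast hne.card_pos
  have hk2 : (2:ℝ) ≤ k := by exact_mod_cast hk
  rcases le_or_gt μ 0 with hμ | hμ
  · linarith
  · set A := bdry n k S with hA
    have hv := hL.mulVec_eigenvectorBasis i
    have hv0 : (⇑(hL.eigenvectorBasis i) : _ → ℝ) ≠ 0 := by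
      intro h0
      apply hL.eigenvectorBasis.orthonormal.ne_zero i
      ext j
      exact congrFun h0 j
    set w := A.conjTranspose *ᵥ ⇑(hL.eigenvectorBasis i) with hw
    have hLv : (A * A.conjTranspose) *ᵥ ⇑(hL.eigenvectorBasis i)
        = μ • ⇑(hL.eigenvectorBasis i) := hv
    have hKw : (A.conjTranspose * A) *ᵥ w = μ • w := by
      rw [hw, mulVec_mulVec, Matrix.mul_assoc, ← mulVec_mulVec, hLv, mulVec_smul]
    have hAw : A *ᵥ w = μ • ⇑(hL.eigenvectorBasis i) := by
      rw [hw, mulVec_mulVec]; exact hLv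
    have hw0 : w ≠ 0 := by
      intro h0
      rw [h0, mulVec_zero] at hAw
      rcases smul_eq_zero.mp hAw.symm with h | h
      · exact hμ.ne' h
      · exact hv0 h
    have heig : Module.End.HasEigenvalue (Matrix.toLin' (A.conjTranspose * A)) μ :=
      Module.End.hasEigenvalue_of_hasEigenvector
        ⟨Module.End.mem_eigenspace_iff.mpr (by rw [Matrix.toLin'_apply]; exact hKw), hw0⟩
    obtain ⟨F, hF⟩ := eigenvalue_mem_ball heig
    rw [Metric.mem_closedBall, Real.dist_eq] at hF
    have hdiag : (A.conjTranspose * A) F F ≤ (k:ℝ) := by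
      refine le_trans (le_abs_self _) ?_
      have h := abs_K_le (by omega) hcard F F
      rwa [Finset.inter_self, hcard F.1 F.2,
        show k.choose (k-1) = k by
          rw [Nat.choose_symm (show 1 ≤ k by omega), Nat.choose_one_right]] at h
    have hoff : ∑ G ∈ Finset.univ.erase F, ‖(A.conjTranspose * A) F G‖
        ≤ (S.card : ℝ) - 1 := by
      have hterm : ∀ G ∈ Finset.univ.erase F, ‖(A.conjTranspose * A) F G‖ ≤ 1 := by
        intro G hG
        have hne' : F ≠ G := (Finset.ne_of_mem_erase hG).symm
        have hsub : F.1 ∩ G.1 ⊆ F.1 := Finset.inter_subset_left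
        have h1 : (F.1 ∩ G.1).card ≤ k := by
          rw [← hcard F.1 F.2]; exact Finset.card_le_card hsub
        have hlt : (F.1 ∩ G.1).card < k := by
          rcases h1.lt_or_eq with h | h
          · exact h
          · exfalso
            have he : F.1 ∩ G.1 = F.1 :=
              Finset.eq_of_subset_of_card_le hsub (by rw [h, hcard F.1 F.2])
            have hFG : F.1 ⊆ G.1 := by
              rw [← he]; exact Finset.inter_subset_right
            have : F.1 = G.1 :=
              Finset.eq_of_subset_of_card_le hFG
                (by rw [hcard F.1 F.2, hcard G.1 G.2])
            exact hne' (Subtype.ext this)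
        have hle : (F.1 ∩ G.1).card.choose (k-1) ≤ 1 := by
          rcases lt_or_ge ((F.1 ∩ G.1).card) (k-1) with h | h
          · rw [Nat.choose_eq_zero_of_lt h]; omega
          · have : (F.1 ∩ G.1).card = k - 1 := by omega
            rw [this, Nat.choose_self]
        calc ‖(A.conjTranspose * A) F G‖ = |(A.conjTranspose * A) F G| := rfl
          _ ≤ (((F.1 ∩ G.1).card.choose (k-1) : ℕ) : ℝ) := abs_K_le (by omega) hcard F G
          _ ≤ 1 := by exact_mod_cast hle
      calc ∑ G ∈ Finset.univ.erase F, ‖(A.conjTranspose * A) F G‖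
          ≤ (Finset.univ.erase F).card • (1:ℝ) :=
            Finset.sum_le_card_nsmul _ _ _ hterm
        _ = ((Finset.univ.erase F).card : ℝ) := by rw [nsmul_eq_mul, mul_one]
        _ = (S.card : ℝ) - 1 := by
            rw [Finset.card_erase_of_mem (Finset.mem_univ F), Finset.card_univ,
              Fintype.card_coe]
            rw [Nat.cast_sub (by exact_mod_cast hcard1)]
            norm_num
    have := abs_sub_le_iff.mp hF
    linarith [this.1]

lemma choose_le_choose_right {N r s : ℕ} (hrs : r ≤ s) (hs : 2*s ≤ N) :
    N.choose r ≤ N.choose s := by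
  induction s with
  | zero =>
    have : r = 0 := by omega
    rw [this]
  | succ s ih =>
    rcases Nat.lt_or_ge r (s+1) with h | h
    · refine (ih (by omega) (by omega)).trans (Nat.choose_le_succ_of_lt_half_left ?_)
      omega
    · have : r = s + 1 := by omega
      rw [this]

lemma keyNat {k t : ℕ} (hk : 2 ≤ k) (ht1 : 1 ≤ t) (htk : t < k) :
    t^2 + t + 1 ≤ (t + k - 1).choose k + k := by
  have hsymm : (t + k - 1).choose k = (t + k - 1).choose (t - 1) := by
    rw [← Nat.choose_symm (show k ≤ t + k - 1 by omega)]
    congr 1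
    omega
  rw [hsymm]
  rcases Nat.lt_or_ge t 3 with h3 | h3
  · interval_cases t
    · rw [show 1 + k - 1 = k by omega, show (1:ℕ) - 1 = 0 from rfl,
        Nat.choose_zero_right]
      omega
    · rw [show 2 + k - 1 = k + 1 by omega, show (2:ℕ) - 1 = 1 from rfl,
        Nat.choose_one_right]
      omega
  · obtain ⟨u, rfl⟩ : ∃ u, t = u + 3 := ⟨t - 3, by omega⟩
    have h1 : (u + 3 + k - 1).choose 2 ≤ (u + 3 + k - 1).choose (u + 3 - 1) :=
      choose_le_choose_right (by omega) (by omega)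
    have h2 : (2*(u+3)).choose 2 ≤ (u + 3 + k - 1).choose 2 :=
      Nat.choose_le_choose 2 (by omega)
    have h3' : (2*(u+3)).choose 2 = (u+3) * (2*u+5) := by
      rw [Nat.choose_two_right, show 2*(u+3) - 1 = 2*u+5 by omega,
        show 2*(u+3) * (2*u+5) = 2*((u+3)*(2*u+5)) by ring,
        Nat.mul_div_cancel_left _ (by norm_num : 0 < 2)]
    nlinarith [h1, h2, h3']

/-- If `1 ≤ t < k` and the `k`-family `S` has matching number greater than `t`
(i.e. it has `t+1` facets pairwise intersecting in fewer than `k-1` elements),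
then `S` satisfies the `t`-th generalized Brouwer inequality. -/
theorem genBrouwer_of_matching (n k t : ℕ) (hk : 2 ≤ k)
    (ht1 : 1 ≤ t) (htk : t < k)
    (S : Finset (Finset (Fin n))) (hne : S.Nonempty)
    (hcard : ∀ F ∈ S, F.card = k)
    (hmatch : ∃ M ⊆ S, M.card = t + 1 ∧
      ∀ F ∈ M, ∀ G ∈ M, F ≠ G → (F ∩ G).card < k - 1) :
    GenBrouwerIneq n k S t := by
  obtain ⟨M, hMS, hM1, -⟩ := hmatch
  have hm : t + 1 ≤ S.card := by
    rw [← hM1]; exact Finset.card_le_card hMS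
  unfold GenBrouwerIneq topEigSum
  set hL := simpLap_isHermitian n k S with hLdef
  set l := ((Finset.univ.val.map hL.eigenvalues).sort (· ≥ ·)) with hldef
  set B : ℝ := (k : ℝ) + S.card - 1 with hB
  have hc1 : (1:ℝ) ≤ S.card := by exact_mod_cast hne.card_pos
  have hk2 : (2:ℝ) ≤ k := by exact_mod_cast hk
  have hBpos : 0 ≤ B := by rw [hB]; linarith
  have hmem : ∀ x ∈ l.take t, x ≤ B := by
    intro x hx
    have hx' : x ∈ l := List.take_subset t l hx
    rw [hldef, Multiset.mem_sort] at hx'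
    obtain ⟨i, -, rfl⟩ := Multiset.mem_map.mp hx'
    exact eig_le hk hne hcard i
  have hsum : (l.take t).sum ≤ (l.take t).length • B :=
    List.sum_le_card_nsmul _ _ hmem
  have hlen : (l.take t).length ≤ t := by
    rw [List.length_take]; exact min_le_left _ _
  have h1 : (l.take t).sum ≤ (t : ℝ) * B := by
    refine hsum.trans ?_
    rw [nsmul_eq_mul]
    exact mul_le_mul_of_nonneg_right (by exact_mod_cast hlen) hBpos
  refine h1.trans ?_
  have hkeyR : (t:ℝ)^2 + t + 1 ≤ ((t+k-1).choose k : ℝ) + k := by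
    exact_mod_cast keyNat hk ht1 htk
  have hmR : (t:ℝ) + 1 ≤ S.card := by exact_mod_cast hm
  have htkR : (t:ℝ) + 1 ≤ k := by exact_mod_cast htk
  rw [hB]
  nlinarith [hkeyR,
    mul_nonneg (by linarith : (0:ℝ) ≤ (k:ℝ) - 1 - t)
      (by linarith : (0:ℝ) ≤ (S.card:ℝ) - (t+1))]
end

section
/- Let S be a k-family with at least two facets such that every two distinct facets of S intersect in exactly k−1 elements (equivalently, the ridge graph of S is complete, i.e., S has matching number 1). Then either all facets of S contain a common (k−1)-element set, or there exist disjoint vertex sets A and B with |A| + |B| = k + 1 and |B| ≥ 3 such that the facets of S are exactly the k-element sets A ∪ C where C ranges over all (|B|−1)-element subsets of B. Conversely, every k-family with at least two facets of either of these two forms has the property that every two distinct facets intersect in exactly k−1 elements. -/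
open Finset

/-- Structure of `k`-families with complete ridge graph (matching number 1):
a `k`-family with at least two facets has all pairwise intersections of
cardinality exactly `k-1` if and only if either all facets contain a common
`(k-1)`-element set, or there are disjoint sets `A`, `B` with
`|A| + |B| = k + 1`, `|B| ≥ 3`, such that the facets are exactly the sets
`A ∪ C` for `C` an `(|B|-1)`-element subset of `B`. -/
theorem matching_number_one_structure (n k : ℕ) (hk : 2 ≤ k)
    (S : Finset (Finset (Fin n)))
    (hcard : ∀ F ∈ S, F.card = k) (h2 : 2 ≤ S.card) :
    (∀ F ∈ S, ∀ G ∈ S, F ≠ G → (F ∩ G).card = k - 1) ↔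
      ((∃ R : Finset (Fin n), R.card = k - 1 ∧ ∀ F ∈ S, R ⊆ F) ∨
        (∃ A B : Finset (Fin n), Disjoint A B ∧ A.card + B.card = k + 1 ∧
          3 ≤ B.card ∧
          ∀ F : Finset (Fin n), F ∈ S ↔ ∃ C ⊆ B, C.card = B.card - 1 ∧ F = A ∪ C)) := by
  constructor
  · intro hpair
    obtain ⟨F0, hF0, G0, hG0, hne0⟩ := Finset.one_lt_card.mp h2
    set R := F0 ∩ G0 with hRdef
    have hRcard : R.card = k - 1 := hpair F0 hF0 G0 hG0 hne0
    by_cases hall : ∀ F ∈ S, R ⊆ F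
    · exact Or.inl ⟨R, hRcard, hall⟩
    · right
      push_neg at hall
      obtain ⟨H, hH, hHR⟩ := hall
      set U := F0 ∪ G0 with hUdef
      have hUcard : U.card = k + 1 := by
        have h := Finset.card_union_add_card_inter F0 G0
        rw [hcard F0 hF0, hcard G0 hG0] at h
        rw [← hRdef, ← hUdef] at h
        omega
      -- key: each K ∈ S is ⊆ U or ⊇ R
      have key : ∀ K ∈ S, K ⊆ U ∨ R ⊆ K := by
        intro K hK
        by_cases hKF : K = F0
        · exact Or.inl (hKF ▸ subset_union_left)
        by_cases hKG : K = G0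
        · exact Or.inl (hKG ▸ subset_union_right)
        have h1 : (K ∩ F0).card = k - 1 := hpair K hK F0 hF0 hKF
        have h2' : (K ∩ G0).card = k - 1 := hpair K hK G0 hG0 hKG
        by_cases heq : K ∩ F0 = K ∩ G0
        · right
          have hsub : K ∩ F0 ⊆ R := by
            intro x hx
            have hx' : x ∈ K ∩ G0 := heq ▸ hx
            rw [hRdef]
            exact mem_inter.mpr ⟨(mem_inter.mp hx).2, (mem_inter.mp hx').2⟩
          have hEq : K ∩ F0 = R := eq_of_subset_of_card_le hsub (by omega)
          rw [← hEq]
          exact inter_subset_left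
        · left
          have hsubK : (K ∩ F0) ∪ (K ∩ G0) ⊆ K :=
            union_subset inter_subset_left inter_subset_left
          have hss : (K ∩ F0) ∩ (K ∩ G0) ⊂ K ∩ F0 := by
            refine Finset.ssubset_iff_subset_ne.mpr ⟨inter_subset_left, ?_⟩
            intro hEq
            refine heq (eq_of_subset_of_card_le ?_ (by omega))
            intro x hx
            rw [← hEq] at hx
            exact (mem_inter.mp hx).2
          have hint : ((K ∩ F0) ∩ (K ∩ G0)).card < k - 1 := by
            have := card_lt_card hss
            omega
          have hcup : k ≤ ((K ∩ F0) ∪ (K ∩ G0)).card := by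
            have := Finset.card_union_add_card_inter (K ∩ F0) (K ∩ G0)
            omega
          have hKeq : (K ∩ F0) ∪ (K ∩ G0) = K :=
            eq_of_subset_of_card_le hsubK (by rw [hcard K hK]; exact hcup)
          rw [← hKeq]
          exact union_subset (inter_subset_right.trans subset_union_left)
            (inter_subset_right.trans subset_union_right)
      -- H ⊆ U, and H = U.erase x for some x ∈ R
      have hHU : H ⊆ U := (key H hH).resolve_right hHR
      obtain ⟨x, hxR, hxH⟩ := Finset.not_subset.mp hHR
      have hxU : x ∈ U := subset_union_left (mem_inter.mp hxR).1
      have hHeq : H = U.erase x := by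
        refine eq_of_subset_of_card_le (subset_erase.mpr ⟨hHU, hxH⟩) ?_
        rw [card_erase_of_mem hxU, hUcard, hcard H hH]; omega
      -- every facet is ⊆ U
      have hsubU : ∀ K ∈ S, K ⊆ U := by
        intro K hK
        rcases key K hK with h | h
        · exact h
        have hKH : K ≠ H := fun e => hHR (e ▸ h)
        have hKHc : (K ∩ H).card = k - 1 := hpair K hK H hH hKH
        have hxK : x ∈ K := h hxR
        have hsub2 : K ∩ H ⊆ K.erase x := by
          intro a ha
          have ha' := mem_inter.mp ha
          exact mem_erase.mpr ⟨fun e => hxH (e ▸ ha'.2), ha'.1⟩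
        have hEq : K ∩ H = K.erase x := by
          refine eq_of_subset_of_card_le hsub2 ?_
          rw [card_erase_of_mem hxK, hcard K hK, hKHc]
        intro a haK
        by_cases hax : a = x
        · exact hax ▸ hxU
        · have : a ∈ K ∩ H := hEq ▸ mem_erase.mpr ⟨hax, haK⟩
          exact hHU (mem_inter.mp this).2
      -- each facet is U minus one point
      have hone : ∀ F ∈ S, ∃ w ∈ U, w ∉ F ∧ F = U.erase w := by
        intro F hF
        have hFU := hsubU F hF
        have h1 : (U \ F).card = 1 := by
          rw [card_sdiff_of_subset hFU, hUcard, hcard F hF]; omega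
        obtain ⟨w, hw⟩ := card_eq_one.mp h1
        have hwUF : w ∈ U \ F := hw ▸ mem_singleton_self w
        have hwU : w ∈ U := (mem_sdiff.mp hwUF).1
        have hwF : w ∉ F := (mem_sdiff.mp hwUF).2
        refine ⟨w, hwU, hwF, ?_⟩
        refine eq_of_subset_of_card_le (subset_erase.mpr ⟨hFU, hwF⟩) ?_
        rw [card_erase_of_mem hwU, hUcard, hcard F hF]; omega
      classical
      set B := U.filter (fun w => U.erase w ∈ S) with hBdef
      have hBU : B ⊆ U := filter_subset _ _
      set A := U \ B with hAdef
      have hABu : A ∪ B = U := sdiff_union_of_subset hBU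
      have hABcard : A.card + B.card = k + 1 := by
        rw [hAdef, card_sdiff_of_subset hBU]
        have := card_le_card hBU
        omega
      -- three distinct elements of B
      obtain ⟨wF, hwFU, hwFF, hwFeq⟩ := hone F0 hF0
      obtain ⟨wG, hwGU, hwGG, hwGeq⟩ := hone G0 hG0
      have hwFB : wF ∈ B := mem_filter.mpr ⟨hwFU, hwFeq ▸ hF0⟩
      have hwGB : wG ∈ B := mem_filter.mpr ⟨hwGU, hwGeq ▸ hG0⟩
      have hxB : x ∈ B := mem_filter.mpr ⟨hxU, hHeq ▸ hH⟩
      have hwFG0 : wF ∈ G0 := (mem_union.mp hwFU).resolve_left hwFF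
      have hwGF0 : wG ∈ F0 := (mem_union.mp hwGU).resolve_right hwGG
      have hne1 : wF ≠ wG := fun e => hwGG (e ▸ hwFG0)
      have hne2 : wF ≠ x := fun e => hwFF (e ▸ (mem_inter.mp hxR).1)
      have hne3 : wG ≠ x := fun e => hwGG (e ▸ (mem_inter.mp hxR).2)
      have hB3 : 3 ≤ B.card := by
        have hsub : ({wF, wG, x} : Finset (Fin n)) ⊆ B := by
          intro a ha
          simp only [mem_insert, mem_singleton] at ha
          rcases ha with rfl | rfl | rfl
          · exact hwFB
          · exact hwGB
          · exact hxB
        have hc : ({wF, wG, x} : Finset (Fin n)).card = 3 := by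
          rw [card_insert_of_notMem (by simp [hne1, hne2]),
            card_insert_of_notMem (by simp [hne3]), card_singleton]
        calc 3 = ({wF, wG, x} : Finset (Fin n)).card := hc.symm
          _ ≤ B.card := card_le_card hsub
      refine ⟨A, B, sdiff_disjoint, hABcard, hB3, ?_⟩
      intro F
      constructor
      · intro hF
        obtain ⟨w, hwU, hwF, hFeq⟩ := hone F hF
        have hwB : w ∈ B := mem_filter.mpr ⟨hwU, hFeq ▸ hF⟩
        have hwA : w ∉ A := fun hwA => (mem_sdiff.mp hwA).2 hwB
        refine ⟨B.erase w, erase_subset _ _, by rw [card_erase_of_mem hwB], ?_⟩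
        have hkey : A ∪ B.erase w = U.erase w := by
          rw [← erase_eq_of_notMem hwA, ← erase_union_distrib, hABu]
        exact hFeq.trans hkey.symm
      · rintro ⟨C, hCB, hCc, rfl⟩
        have h1 : (B \ C).card = 1 := by
          rw [card_sdiff_of_subset hCB, hCc]; omega
        obtain ⟨w, hw⟩ := card_eq_one.mp h1
        have hwBC : w ∈ B \ C := hw ▸ mem_singleton_self w
        have hwB : w ∈ B := (mem_sdiff.mp hwBC).1
        have hwC : w ∉ C := (mem_sdiff.mp hwBC).2
        have hwA : w ∉ A := fun hwA => (mem_sdiff.mp hwA).2 hwB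
        have hCeq : C = B.erase w := by
          refine eq_of_subset_of_card_le (subset_erase.mpr ⟨hCB, hwC⟩) ?_
          rw [card_erase_of_mem hwB, hCc]
        have hkey : A ∪ C = U.erase w := by
          rw [hCeq, ← erase_eq_of_notMem hwA, ← erase_union_distrib, hABu]
        rw [hkey]
        exact (mem_filter.mp hwB).2
  · rintro (⟨R, hRc, hRs⟩ | ⟨A, B, hd, hABc, hB3, hmem⟩) <;> intro F hF G hG hne
    · have hsub : R ⊆ F ∩ G := subset_inter (hRs F hF) (hRs G hG)
      have h1 : k - 1 ≤ (F ∩ G).card := by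
        have := card_le_card hsub; omega
      have hss : F ∩ G ⊂ F := by
        refine Finset.ssubset_iff_subset_ne.mpr ⟨inter_subset_left, ?_⟩
        intro hEq
        have hFG : F ⊆ G := by
          intro a ha
          rw [← hEq] at ha
          exact (mem_inter.mp ha).2
        exact hne (eq_of_subset_of_card_le hFG
          (by rw [hcard F hF, hcard G hG]))
      have h2' : (F ∩ G).card < k := by
        have := card_lt_card hss
        rw [hcard F hF] at this
        exact this
      omega
    · obtain ⟨C, hCB, hCc, rfl⟩ := (hmem F).mp hF
      obtain ⟨C', hC'B, hC'c, rfl⟩ := (hmem G).mp hG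
      have hCne : C ≠ C' := by rintro rfl; exact hne rfl
      have hdist : (A ∪ C) ∩ (A ∪ C') = A ∪ C ∩ C' := by
        rw [← union_inter_distrib_left]
      have hdisj : Disjoint A (C ∩ C') :=
        hd.mono_right (inter_subset_left.trans hCB)
      have hss : C ∩ C' ⊂ C := by
        refine Finset.ssubset_iff_subset_ne.mpr ⟨inter_subset_left, ?_⟩
        intro hEq
        have hCC' : C ⊆ C' := by
          intro a ha
          rw [← hEq] at ha
          exact (mem_inter.mp ha).2
        exact hCne (eq_of_subset_of_card_le hCC' (by rw [hCc, hC'c]))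
      have hupper : (C ∩ C').card < B.card - 1 := by
        have := card_lt_card hss
        omega
      have hlower : B.card - 2 ≤ (C ∩ C').card := by
        have h := Finset.card_union_add_card_inter C C'
        have hU : (C ∪ C').card ≤ B.card :=
          card_le_card (union_subset hCB hC'B)
        omega
      have hint : (C ∩ C').card = B.card - 2 := by omega
      rw [hdist, card_union_of_disjoint hdisj, hint]
      omega
end
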